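/- arXiv:2004.06039 — 12 statements merged into one kernel-verified Lean document; each statement's English description precedes it below -/
import Mathlib

section
/- Let d, R, k be positive rational numbers with d² − R = k⁴, d > k², and √R irrational. Then the positive real fourth root of d + √R equals √(√((d+k²)/8) + k/2) + √(√((d+k²)/8) − k/2), provided √((d+k²)/8) ≥ k/2. -/
theorem euclid_denesting_fourth (d R k : ℚ) (hd : 0 < d) (hR : 0 < R) (hk : 0 < k)
    (h : d ^ 2 - R = k ^ 4) (hdk : (k : ℚ) ^ 2 < d)
    (hirr : Irrational (Real.sqrt R))
    (hge : (k : ℝ) / 2 ≤ Real.sqrt (((d : ℝ) + (k : ℝ) ^ 2) / 8)) :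
    ((d : ℝ) + Real.sqrt R) ^ ((1 : ℝ) / 4) =
      Real.sqrt (Real.sqrt (((d : ℝ) + (k : ℝ) ^ 2) / 8) + (k : ℝ) / 2) +
        Real.sqrt (Real.sqrt (((d : ℝ) + (k : ℝ) ^ 2) / 8) - (k : ℝ) / 2) := by
  have hd' : (0:ℝ) < (d:ℝ) := by exact_mod_cast hd
  have hk' : (0:ℝ) < (k:ℝ) := by exact_mod_cast hk
  have hR' : (0:ℝ) < (R:ℝ) := by exact_mod_cast hR
  have hdk' : (k:ℝ)^2 < (d:ℝ) := by exact_mod_cast hdk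
  have hQ : (d:ℝ)^2 - (R:ℝ) = (k:ℝ)^4 := by exact_mod_cast h
  set s := Real.sqrt (((d : ℝ) + (k : ℝ) ^ 2) / 8) with hs
  set t := Real.sqrt (((d : ℝ) - (k : ℝ) ^ 2) / 8) with ht
  have hs0 : 0 ≤ s := Real.sqrt_nonneg _
  have hA : (0:ℝ) ≤ s + k/2 := by positivity
  have hB : (0:ℝ) ≤ s - k/2 := by linarith
  have hs2 : s^2 = ((d : ℝ) + (k : ℝ) ^ 2) / 8 := Real.sq_sqrt (by positivity)
  have ht2 : t^2 = ((d : ℝ) - (k : ℝ) ^ 2) / 8 := Real.sq_sqrt (by linarith)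
  have ht0 : 0 ≤ t := Real.sqrt_nonneg _
  have hprod : Real.sqrt (s + k/2) * Real.sqrt (s - k/2) = t := by
    rw [← Real.sqrt_mul hA, ht]
    congr 1
    linear_combination hs2
  set X := Real.sqrt (s + k/2) + Real.sqrt (s - k/2) with hX
  have hXpos : 0 < X := by
    have : 0 < Real.sqrt (s + k/2) := Real.sqrt_pos.2 (by linarith)
    have : 0 ≤ Real.sqrt (s - k/2) := Real.sqrt_nonneg _
    rw [hX]; linarith
  have hX2 : X^2 = 2*s + 2*t := by
    have h1 : Real.sqrt (s + k/2)^2 = s + k/2 := Real.sq_sqrt hA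
    have h2 : Real.sqrt (s - k/2)^2 = s - k/2 := Real.sq_sqrt hB
    rw [hX]; linear_combination h1 + h2 + 2*hprod
  have hst : s * t = Real.sqrt R / 8 := by
    rw [hs, ht, ← Real.sqrt_mul (by positivity)]
    have h64 : ((d : ℝ) + (k : ℝ) ^ 2) / 8 * (((d : ℝ) - (k : ℝ) ^ 2) / 8) = R / 64 := by
      linear_combination hQ / 64
    rw [h64, Real.sqrt_div hR'.le,
      show Real.sqrt 64 = 8 by
        rw [show (64:ℝ) = 8^2 by norm_num, Real.sqrt_sq (by norm_num : (0:ℝ) ≤ 8)]]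
  have hX4 : X^4 = (d:ℝ) + Real.sqrt R := by
    have : X^4 = (X^2)^2 := by ring
    rw [this, hX2]
    linear_combination 4*hs2 + 4*ht2 + 8*hst
  rw [← hX4]
  rw [show (X:ℝ)^4 = X^(4:ℕ) by norm_num, ← Real.rpow_natCast X 4,
    ← Real.rpow_mul hXpos.le]
  norm_num
end

section
/- For every odd natural number p ≥ 3, there exist unique rational numbers C_p, C_{p−2}, …, C_1 such that X^p + 1 = Σ_{k=0}^{(p−1)/2} C_{p−2k} · X^k · (X+1)^{p−2k} as polynomials in ℚ[X]. -/
/-!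
With `a = X` and `b = 1` we have `a + b = X + 1` and `a * b = X`, so `V m = X ^ m + 1 = a ^ m + b ^ m`
is the Lucas sequence with parameters `P = X + 1`, `Q = X`. The recursion
`V (m + 2) = P * V (m + 1) - Q * V m` shows by induction that `V m` is a combination of the
monomials `Q ^ k * P ^ (m - 2 * k)`, `2 * k ≤ m`. These are linearly independent because
`X ^ k * (X + 1) ^ (m - 2 * k)` has `X`-adic order exactly `k`, with lowest coefficient `1`.
-/

open Polynomial Submodule Set

theorem Polynomial.linearIndependent_of_coeff_triangular {R : Type*} [Ring R] {n : ℕ}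
    (f : Fin n → R[X]) (h_diag : ∀ i, (f i).coeff i = 1)
    (h_lower : ∀ i j, i < j → (f j).coeff i = 0) : LinearIndependent R f := by
  rw [Fintype.linearIndependent_iff]
  intro g hg i
  induction i using WellFoundedLT.induction with
  | _ i ih =>
  have hcoeff := congrArg (coeff · i) hg
  simp only [finsetSum_coeff, coeff_smul, smul_eq_mul, coeff_zero] at hcoeff
  rwa [Finset.sum_eq_single i _ (by simp), h_diag, mul_one] at hcoeff
  intro j _ hji
  rcases lt_or_gt_of_ne hji with hlt | hgt
  · rw [ih j hlt, zero_mul]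
  · rw [h_lower i j hgt, mul_zero]

section LucasMonomial

variable {R : Type*} [CommRing R]

variable (R) in
noncomputable def lucasMonomial (m : ℕ) (k : Fin (m / 2 + 1)) : R[X] :=
  X ^ (k : ℕ) * (X + 1) ^ (m - 2 * (k : ℕ))

theorem coeff_lucasMonomial_self (m : ℕ) (k : Fin (m / 2 + 1)) :
    (lucasMonomial R m k).coeff k = 1 := by
  simp [lucasMonomial, coeff_X_pow_mul', coeff_zero_eq_eval_zero]

theorem coeff_lucasMonomial_of_lt {m : ℕ} {i j : Fin (m / 2 + 1)} (h : i < j) :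
    (lucasMonomial R m j).coeff i = 0 := by
  rw [lucasMonomial, coeff_X_pow_mul', if_neg (not_le.mpr (Fin.lt_def.mp h))]

theorem linearIndependent_lucasMonomial (m : ℕ) : LinearIndependent R (lucasMonomial R m) :=
  linearIndependent_of_coeff_triangular _ (coeff_lucasMonomial_self m)
    fun _ _ => coeff_lucasMonomial_of_lt

theorem mul_mem_span_lucasMonomial {m m' : ℕ} {q : R[X]}
    (hq : ∀ k, q * lucasMonomial R m k ∈ span R (range (lucasMonomial R m')))
    {x : R[X]} (hx : x ∈ span R (range (lucasMonomial R m))) :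
    q * x ∈ span R (range (lucasMonomial R m')) := by
  induction hx using span_induction with
  | mem y hy => obtain ⟨k, rfl⟩ := hy; exact hq k
  | zero => simp
  | add y z _ _ hy hz => rw [mul_add]; exact add_mem hy hz
  | smul r y _ hy => rw [mul_smul_comm]; exact smul_mem _ r hy

theorem X_add_one_mul_lucasMonomial (m : ℕ) (k : Fin ((m + 1) / 2 + 1)) :
    (X + 1) * lucasMonomial R (m + 1) k = lucasMonomial R (m + 2) ⟨k, by omega⟩ := by
  rw [lucasMonomial, lucasMonomial, show m + 2 - 2 * (k : ℕ) = m + 1 - 2 * k + 1 by omega]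
  ring

theorem X_mul_lucasMonomial (m : ℕ) (k : Fin (m / 2 + 1)) :
    X * lucasMonomial R m k = lucasMonomial R (m + 2) ⟨k + 1, by omega⟩ := by
  rw [lucasMonomial, lucasMonomial, show m + 2 - 2 * ((k : ℕ) + 1) = m - 2 * k by omega]
  ring

theorem X_pow_add_one_mem_span_lucasMonomial (m : ℕ) :
    X ^ m + 1 ∈ span R (range (lucasMonomial R m)) := by
  induction m using Nat.twoStepInduction with
  | zero =>
    have h : (1 : R[X]) ∈ span R (range (lucasMonomial R 0)) :=
      subset_span ⟨0, by simp [lucasMonomial]⟩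
    rw [pow_zero]
    exact add_mem h h
  | one =>
    rw [pow_one]
    exact subset_span ⟨0, by simp [lucasMonomial]⟩
  | more m hm hm1 =>
    have hrec : (X ^ (m + 2) + 1 : R[X]) = (X + 1) * (X ^ (m + 1) + 1) - X * (X ^ m + 1) := by
      ring
    rw [hrec]
    refine sub_mem (mul_mem_span_lucasMonomial (fun k => ?_) hm1)
      (mul_mem_span_lucasMonomial (fun k => ?_) hm)
    · rw [X_add_one_mul_lucasMonomial]; exact subset_span ⟨_, rfl⟩
    · rw [X_mul_lucasMonomial]; exact subset_span ⟨_, rfl⟩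

theorem existsUnique_sum_smul_lucasMonomial (m : ℕ) :
    ∃! c : Fin (m / 2 + 1) → R, X ^ m + 1 = ∑ k, c k • lucasMonomial R m k := by
  obtain ⟨c, hc⟩ := (mem_span_range_iff_exists_fun R).mp (X_pow_add_one_mem_span_lucasMonomial m)
  refine ⟨c, hc.symm, fun c' hc' => funext ?_⟩
  exact Fintype.linearIndependent_iffₛ.mp (linearIndependent_lucasMonomial m) _ _ (hc' ▸ hc).symm

end LucasMonomial

theorem exists_unique_expansion_general (p : ℕ) (hp : Odd p) :
    ∃! C : Fin ((p - 1) / 2 + 1) → ℚ,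
      (X ^ p + 1 : ℚ[X]) =
        ∑ k : Fin ((p - 1) / 2 + 1),
          Polynomial.C (C k) * X ^ (k : ℕ) * (X + 1) ^ (p - 2 * (k : ℕ)) := by
  have hhalf : (p - 1) / 2 = p / 2 := by
    obtain ⟨n, rfl⟩ := hp
    omega
  rw [hhalf]
  simp_rw [mul_assoc, ← smul_eq_C_mul]
  exact existsUnique_sum_smul_lucasMonomial p

theorem exists_unique_expansion (p : ℕ) (hp : Odd p) (hp3 : 3 ≤ p) :
    ∃! C : Fin ((p - 1) / 2 + 1) → ℚ,
      (X ^ p + 1 : ℚ[X]) =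
        ∑ k : Fin ((p - 1) / 2 + 1),
          Polynomial.C (C k) * X ^ (k : ℕ) * (X + 1) ^ (p - 2 * (k : ℕ)) :=
  exists_unique_expansion_general p hp
end

section
/- For every odd natural number p ≥ 3 and every integer j with 1 ≤ j ≤ (p−1)/2, the sum Σ_{k=0}^{j} (−1)^k · (p/(p−k)) · C(p−k, k) · C(p−2k, j−k) equals 0, where C(m,n) denotes the binomial coefficient. -/
/-!
For `k ≥ 1` the Lucas-type coefficient splits as
`p / (p - k) * C(p - k, k) = C(p - k, k) + C(p - k - 1, k - 1)`, so the sum is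
`T(p, j) - T(p - 2, j - 1)` with `T(n, j) = ∑ₖ (-1)^k C(n - k, k) C(n - 2k, j - k)`.
Since `C(n - k, k) C(n - 2k, j - k) = C(n - k, j) C(j, k)`, `T(n, j)` is, read backwards,
the `j`-th forward difference of `x ↦ C(x, j)` at `n - j`, which is `1` whenever `j ≤ n`.
-/

open Finset

namespace Nat

theorem alternating_sum_choose_mul_choose_sub {j n : ℕ} (h : j ≤ n) :
    ∑ k ∈ range (j + 1), (-1 : ℤ) ^ k * j.choose k * (n - k).choose j = 1 := by
  have hΔ := congrFun (fwdDiff_iter_choose 0 j) (n - j)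
  rw [fwdDiff_iter_eq_sum_shift, ← sum_range_reflect] at hΔ
  simp only [choose_zero_right, cast_one, add_zero, smul_eq_mul, mul_one] at hΔ
  refine Eq.trans (sum_congr rfl fun k hk => ?_) hΔ
  have hk : k ≤ j := Nat.lt_succ_iff.mp (mem_range.mp hk)
  rw [add_tsub_cancel_right, Nat.sub_sub_self hk, choose_symm hk,
    show n - j + (j - k) = n - k by omega]

theorem alternating_sum_choose_sub_mul_choose_sub_two_mul {R : Type*} [Ring R] {j n : ℕ}
    (h : j ≤ n) :
    ∑ k ∈ range (j + 1), (-1 : R) ^ k * (n - k).choose k * (n - 2 * k).choose (j - k) = 1 := by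
  have hℤ :
      ∑ k ∈ range (j + 1), (-1 : ℤ) ^ k * (n - k).choose k * (n - 2 * k).choose (j - k) = 1 := by
    refine Eq.trans (sum_congr rfl fun k hk => ?_) (alternating_sum_choose_mul_choose_sub h)
    have hk : k ≤ j := Nat.lt_succ_iff.mp (mem_range.mp hk)
    rw [mul_assoc, mul_assoc, two_mul, ← Nat.sub_sub, ← cast_mul, ← choose_mul hk, cast_mul,
      mul_comm (j.choose k : ℤ)]
  exact_mod_cast congrArg (Int.cast : ℤ → R) hℤ

theorem div_sub_mul_choose_eq_choose_add_choose {K : Type*} [Field K] [CharZero K] {p k : ℕ}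
    (hk : k + 1 < p) :
    (p : K) / (p - (k + 1 : ℕ)) * (p - (k + 1)).choose (k + 1)
      = (p - (k + 1)).choose (k + 1) + (p - (k + 2)).choose k := by
  obtain ⟨n, rfl⟩ : ∃ n, p = n + k + 2 := ⟨p - (k + 2), by omega⟩
  have hpascal : (n + 1 : K) * n.choose k = (n + 1).choose (k + 1) * (k + 1) := by
    exact_mod_cast add_one_mul_choose_eq n k
  rw [show n + k + 2 - (k + 1) = n + 1 by omega, show n + k + 2 - (k + 2) = n by omega,
    show ((n + k + 2 : ℕ) : K) - (k + 1 : ℕ) = n + 1 by push_cast; ring]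
  have : (n + 1 : K) ≠ 0 := n.cast_add_one_ne_zero
  field_simp
  push_cast
  linear_combination -hpascal

end Nat

theorem sum_vanishes_general (p : ℕ) (j : ℕ)
    (hj1 : 1 ≤ j) (hj2 : j ≤ (p - 1) / 2) :
    ∑ k ∈ Finset.range (j + 1),
      ((-1 : ℚ) ^ k * ((p : ℚ) / ((p : ℚ) - (k : ℚ))) *
        (Nat.choose (p - k) k : ℚ) * (Nat.choose (p - 2 * k) (j - k) : ℚ)) = 0 := by
  obtain ⟨i, rfl⟩ : ∃ i, j = i + 1 := ⟨j - 1, by omega⟩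
  have hp : (p : ℚ) ≠ 0 := by norm_cast; omega
  have hT₁ := Nat.alternating_sum_choose_sub_mul_choose_sub_two_mul (R := ℚ) (j := i + 1) (n := p)
    (by omega)
  have hT₂ := Nat.alternating_sum_choose_sub_mul_choose_sub_two_mul (R := ℚ) (j := i) (n := p - 2)
    (by omega)
  rw [sum_range_succ'] at hT₁ ⊢
  have hsplit : ∀ m ∈ range (i + 1),
      (-1 : ℚ) ^ (m + 1) * (p / (p - (m + 1 : ℕ))) * (p - (m + 1)).choose (m + 1)
          * (p - 2 * (m + 1)).choose (i + 1 - (m + 1))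
        = (-1 : ℚ) ^ (m + 1) * (p - (m + 1)).choose (m + 1)
            * (p - 2 * (m + 1)).choose (i + 1 - (m + 1))
          - (-1 : ℚ) ^ m * (p - 2 - m).choose m * (p - 2 - 2 * m).choose (i - m) := by
    intro m hm
    have hm : m ≤ i := Nat.lt_succ_iff.mp (mem_range.mp hm)
    rw [mul_assoc _ (_ / _), Nat.div_sub_mul_choose_eq_choose_add_choose (by omega),
      show p - (m + 2) = p - 2 - m by omega, show p - 2 * (m + 1) = p - 2 - 2 * m by omega,
      show i + 1 - (m + 1) = i - m by omega]
    ring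
  rw [sum_congr rfl hsplit, sum_sub_distrib, hT₂]
  simp only [pow_zero, Nat.cast_zero, sub_zero, div_self hp, mul_one, one_mul, Nat.sub_zero,
    Nat.choose_zero_right, Nat.cast_one, mul_zero] at hT₁ ⊢
  linear_combination hT₁

theorem sum_vanishes (p : ℕ) (hp : Odd p) (hp3 : 3 ≤ p) (j : ℕ)
    (hj1 : 1 ≤ j) (hj2 : j ≤ (p - 1) / 2) :
    ∑ k ∈ Finset.range (j + 1),
      ((-1 : ℚ) ^ k * ((p : ℚ) / ((p : ℚ) - (k : ℚ))) *
        (Nat.choose (p - k) k : ℚ) * (Nat.choose (p - 2 * k) (j - k) : ℚ)) = 0 :=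
  sum_vanishes_general p j hj1 hj2
end

section
/- For every odd natural number p ≥ 3, the polynomial identity X^p + 1 = Σ_{k=0}^{(p−1)/2} (−1)^k · (p/(p−k)) · C(p−k, k) · X^k · (X+1)^{p−2k} holds in ℚ[X]. -/
/-!
Write `E n = E_n(x, a) = ∑ₖ (-a)ᵏ C(n-k, k) x^(n-2k)` for the Dickson polynomials of the second
kind, which satisfy `E (n+2) = x E (n+1) - a E n`. For `x = u + v`, `a = u v` this recurrence gives
`E (n+1) = u E n + v^(n+1)`, and hence `E (n+2) - a E n = u^(n+2) + v^(n+2)`.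
Since `p/(p-k) C(p-k, k) = C(p-k, k) + C(p-k-1, k-1)`, the right-hand side of the theorem is
`E p - X E (p-2)` for `x = X + 1`, `a = X`, i.e. for `u = X`, `v = 1`; oddness of `p` makes the
range `k ≤ (p-1)/2` contain every nonzero term.
-/

open Polynomial Finset

section Dickson

variable {R : Type*} [CommRing R]

def dicksonTwoTerm (x a : R) (n k : ℕ) : R :=
  (-a) ^ k * ((n - k).choose k : R) * x ^ (n - 2 * k)

/-- The value at `x` of `Polynomial.dickson 2 a n`. -/
def dicksonTwo (x a : R) (n : ℕ) : R :=
  ∑ k ∈ range (n / 2 + 1), dicksonTwoTerm x a n k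

theorem dicksonTwoTerm_eq_zero {x a : R} {n k : ℕ} (h : n < 2 * k) :
    dicksonTwoTerm x a n k = 0 := by
  simp [dicksonTwoTerm, Nat.choose_eq_zero_of_lt (by omega : n - k < k)]

theorem dicksonTwo_eq_sum_range {x a : R} {n m : ℕ} (h : n / 2 < m) :
    dicksonTwo x a n = ∑ k ∈ range m, dicksonTwoTerm x a n k := by
  refine sum_subset (range_subset_range.2 h) fun k _ hk => dicksonTwoTerm_eq_zero ?_
  simp only [mem_range] at hk
  omega

theorem dicksonTwoTerm_add_two_succ (x a : R) (n k : ℕ) :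
    dicksonTwoTerm x a (n + 2) (k + 1) =
      x * dicksonTwoTerm x a (n + 1) (k + 1) - a * dicksonTwoTerm x a n k := by
  rcases lt_trichotomy n (2 * k) with h | rfl | h
  · simp [dicksonTwoTerm_eq_zero h, dicksonTwoTerm_eq_zero (by omega : n + 2 < 2 * (k + 1)),
      dicksonTwoTerm_eq_zero (by omega : n + 1 < 2 * (k + 1))]
  · rw [dicksonTwoTerm_eq_zero (by omega : 2 * k + 1 < 2 * (k + 1))]
    simp only [dicksonTwoTerm, show 2 * k + 2 - (k + 1) = k + 1 by omega,
      show 2 * k + 2 - 2 * (k + 1) = 0 by omega, show 2 * k - k = k by omega, tsub_self,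
      Nat.choose_self, Nat.cast_one, mul_one, pow_zero, mul_zero, zero_sub]
    ring
  · obtain ⟨m, rfl⟩ := Nat.exists_eq_add_of_lt h
    simp only [dicksonTwoTerm, show 2 * k + m + 1 + 2 - (k + 1) = k + m + 1 + 1 by omega,
      show 2 * k + m + 1 + 1 - (k + 1) = k + m + 1 by omega,
      show 2 * k + m + 1 - k = k + m + 1 by omega,
      show 2 * k + m + 1 + 2 - 2 * (k + 1) = m + 1 by omega,
      show 2 * k + m + 1 + 1 - 2 * (k + 1) = m by omega,
      show 2 * k + m + 1 - 2 * k = m + 1 by omega, Nat.choose_succ_succ' (k + m + 1) k]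
    push_cast
    ring

theorem dicksonTwo_add_two (x a : R) (n : ℕ) :
    dicksonTwo x a (n + 2) = x * dicksonTwo x a (n + 1) - a * dicksonTwo x a n := by
  have hzero : dicksonTwoTerm x a (n + 2) 0 = x * dicksonTwoTerm x a (n + 1) 0 := by
    simp only [dicksonTwoTerm, pow_zero, Nat.choose_zero_right, Nat.cast_one, mul_one, one_mul,
      mul_zero, Nat.sub_zero, pow_succ']
  rw [dicksonTwo_eq_sum_range (m := n / 2 + 2) (by omega),
    dicksonTwo_eq_sum_range (n := n + 1) (m := n / 2 + 2) (by omega), dicksonTwo,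
    sum_range_succ', sum_range_succ' _ (n / 2 + 1)]
  simp only [dicksonTwoTerm_add_two_succ, sum_sub_distrib, ← mul_sum, hzero]
  ring

theorem dicksonTwo_zero (x a : R) : dicksonTwo x a 0 = 1 := by
  simp [dicksonTwo, dicksonTwoTerm]

theorem dicksonTwo_one (x a : R) : dicksonTwo x a 1 = x := by
  simp [dicksonTwo, dicksonTwoTerm]

theorem dicksonTwo_add_mul_succ (u v : R) (n : ℕ) :
    dicksonTwo (u + v) (u * v) (n + 1) = u * dicksonTwo (u + v) (u * v) n + v ^ (n + 1) := by
  induction n with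
  | zero => simp [dicksonTwo_zero, dicksonTwo_one]
  | succ n ih => rw [dicksonTwo_add_two, ih]; ring

theorem dicksonTwo_add_two_sub_mul (u v : R) (n : ℕ) :
    dicksonTwo (u + v) (u * v) (n + 2) - u * v * dicksonTwo (u + v) (u * v) n =
      u ^ (n + 2) + v ^ (n + 2) := by
  have hv := dicksonTwo_add_mul_succ v u n
  rw [add_comm v, mul_comm v] at hv
  rw [dicksonTwo_add_mul_succ u v (n + 1), hv]
  ring

end Dickson

theorem div_mul_choose_eq_choose_add_choose {K : Type*} [Field K] [CharZero K] (m j : ℕ) :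
    (m + j + 2 : K) / (m + 1) * ((m + 1).choose (j + 1) : K) =
      (m + 1).choose (j + 1) + m.choose j := by
  have h := Nat.add_one_mul_choose_eq m j
  have hm : (m + 1 : K) ≠ 0 := Nat.cast_add_one_ne_zero m
  field_simp
  rw [← Nat.cast_inj (R := K)] at h
  push_cast at h
  linear_combination -h

theorem C_coeff_mul_eq_dicksonTwoTerm_sub {K : Type*} [Field K] [CharZero K] {n j : ℕ}
    (hj : j ≤ n) :
    C ((-1 : K) ^ (j + 1) * (((n + 2 : ℕ) : K) / ((n + 2 : ℕ) - ((j + 1 : ℕ) : K))) *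
        ((n + 2 - (j + 1)).choose (j + 1) : K)) * X ^ (j + 1) * (X + 1) ^ (n + 2 - 2 * (j + 1)) =
      dicksonTwoTerm (X + 1) X (n + 2) (j + 1) - X * dicksonTwoTerm (X + 1) X n j := by
  obtain ⟨m, rfl⟩ := Nat.exists_eq_add_of_le hj
  have hcoeff := div_mul_choose_eq_choose_add_choose (K := K) m j
  rw [show ((j + m + 2 : ℕ) : K) - ((j + 1 : ℕ) : K) = m + 1 by push_cast; ring,
    show j + m + 2 - (j + 1) = m + 1 by omega, mul_assoc _ (_ / _),
    show ((j + m + 2 : ℕ) : K) = m + j + 2 by push_cast; ring, hcoeff]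
  simp only [dicksonTwoTerm, show j + m + 2 - (j + 1) = m + 1 by omega,
    show j + m + 2 - 2 * (j + 1) = j + m - 2 * j by omega, show j + m - j = m by omega]
  simp only [map_mul, map_add, map_pow, map_neg, map_one, map_natCast]
  ring

theorem expansion_explicit (p : ℕ) (hp : Odd p) (hp3 : 3 ≤ p) :
    (X ^ p + 1 : ℚ[X]) =
      ∑ k ∈ Finset.range ((p - 1) / 2 + 1),
        Polynomial.C ((-1 : ℚ) ^ k * ((p : ℚ) / ((p : ℚ) - (k : ℚ))) *
            (Nat.choose (p - k) k : ℚ)) *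
          X ^ k * (X + 1) ^ (p - 2 * k) := by
  obtain ⟨n, rfl⟩ : ∃ n, p = n + 2 := ⟨p - 2, by omega⟩
  have hrange : (n + 2 - 1) / 2 = n / 2 + 1 := by
    obtain ⟨m, hm⟩ := hp
    omega
  have hlucas := dicksonTwo_add_two_sub_mul (X : ℚ[X]) 1 n
  simp only [mul_one, one_pow] at hlucas
  rw [hrange, sum_range_succ', sum_congr rfl fun j hj =>
      C_coeff_mul_eq_dicksonTwoTerm_sub (by simp only [mem_range] at hj; omega),
    sum_sub_distrib, ← mul_sum, ← hlucas, dicksonTwo_eq_sum_range (m := n / 2 + 2) (by omega),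
    sum_range_succ' _ (n / 2 + 1), dicksonTwo, add_sub_right_comm]
  congr 1
  simp [dicksonTwoTerm, div_self (by positivity : (n + 2 : ℚ) ≠ 0)]
end

section
/- Let K be a field of characteristic 0, d, R ∈ K nonzero, √R a fixed square root of R in an algebraic closure, y a root of Z^p − d − √R and y' a root of Z^p − d + √R, where p ≥ 3 is odd. Set z = y·y', D = d² − R ≠ 0, and u = z^((p−1)/2)(y + y'). Then u is a root of the polynomial f(Z) = D^((p−1)/2) · Σ_{k=0}^{(p−1)/2} (c_{2k+1}/D^k) Z^{2k+1} − 2d·D^((p−1)/2), where c_{2k+1} = (−1)^((p−1)/2−k) · (p/((p+1)/2 + k)) · C((p+1)/2 + k, 2k+1). -/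
/-!
With `a = y y'` and `s = y + y'` we have `a ^ p = D` and `y ^ p + y' ^ p = 2 d`, and the `k`-th term
of the sum is `c_{2k+1} a ^ ((p - 1) / 2 - k) s ^ (2k + 1)`. So the claim is Waring's formula
for `y ^ p + y' ^ p` in terms of `s` and `a`. Replacing `(y, y')` by `(y / s, y' / s)` reduces it
to the case `u + v = 1`, where `uⁿ + vⁿ = V_n(uv)` for the Lucas polynomial
`V_n = 2 U_{n+1} - U_n`; the `c_{2k+1}` are the coefficients of `V_p`, read backwards.
-/

open Finset

/-- The coefficient `c_{2k+1}` of the paper. -/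
def cOdd (p k : ℕ) : ℚ :=
  (-1) ^ ((p - 1) / 2 - k) * ((p : ℚ) / (((p + 1) / 2 + k : ℕ) : ℚ)) *
    (Nat.choose ((p + 1) / 2 + k) (2 * k + 1) : ℚ)

open Polynomial

/-- The Lucas polynomials `U_n(1, X)`: for `u + v = 1`, `(u - v) U_n(uv) = uⁿ - vⁿ`. -/
noncomputable def lucasU : ℕ → ℤ[X]
  | 0 => 0
  | 1 => 1
  | n + 2 => lucasU (n + 1) - X * lucasU n

theorem lucasU_add_two (n : ℕ) : lucasU (n + 2) = lucasU (n + 1) - X * lucasU n := rfl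

theorem coeff_lucasU : ∀ n j : ℕ, (lucasU (n + 1)).coeff j = (-1) ^ j * ((n - j).choose j : ℤ)
  | 0, j => by rcases j with _ | j <;> simp [lucasU, coeff_one]
  | 1, j => by rcases j with _ | _ | j <;> simp [lucasU, coeff_one]
  | n + 2, 0 => by
    rw [lucasU_add_two, coeff_sub, coeff_X_mul_zero, coeff_lucasU (n + 1) 0]
    simp
  | n + 2, j + 1 => by
    rw [lucasU_add_two, coeff_sub, coeff_X_mul, coeff_lucasU (n + 1) (j + 1), coeff_lucasU n j]
    rcases le_or_gt j n with hj | hj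
    · rw [show n + 2 - (j + 1) = n - j + 1 by omega, show n + 1 - (j + 1) = n - j by omega,
        Nat.choose_succ_succ']
      push_cast; ring
    · simp [show n + 2 - (j + 1) = 0 by omega, show n + 1 - (j + 1) = 0 by omega,
        show n - j = 0 by omega, Nat.choose_eq_zero_of_lt (show 0 < j by omega)]

noncomputable def lucasV (n : ℕ) : ℤ[X] := 2 * lucasU (n + 1) - lucasU n

theorem coeff_lucasV (n j : ℕ) :
    (lucasV (n + 1)).coeff j = (-1) ^ j * (2 * (n + 1 - j).choose j - (n - j).choose j : ℤ) := by
  rw [lucasV, coeff_sub, coeff_ofNat_mul, coeff_lucasU, coeff_lucasU]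
  ring

theorem natDegree_lucasV_le : ∀ n : ℕ, (lucasV n).natDegree ≤ n / 2
  | 0 => by simp [lucasV, lucasU]
  | n + 1 => natDegree_le_iff_coeff_eq_zero.2 fun j hj => by
    rw [coeff_lucasV, Nat.choose_eq_zero_of_lt (by omega), Nat.choose_eq_zero_of_lt (by omega)]
    simp

theorem aeval_lucasV {A : Type*} [CommRing A] {u v : A} (huv : u + v = 1) :
    ∀ n : ℕ, aeval (u * v) (lucasV n) = u ^ n + v ^ n
  | 0 => by
    simp only [lucasV, lucasU, map_sub, map_mul, map_ofNat, map_one, map_zero]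
    norm_num
  | 1 => by
    simp only [lucasV, lucasU, sub_zero, mul_zero, map_sub, map_mul, map_ofNat, map_one]
    norm_num [huv]
  | n + 2 => by
    have ih₁ := aeval_lucasV huv (n + 1)
    have ih₀ := aeval_lucasV huv n
    simp only [lucasV, lucasU_add_two, map_sub, map_mul, map_ofNat, aeval_X] at ih₁ ih₀ ⊢
    linear_combination ih₁ - u * v * ih₀ - (u ^ (n + 1) + v ^ (n + 1)) * huv

theorem pow_add_pow_eq_sum_coeff_lucasV {L : Type*} [Field L] {x y : L} (hs : x + y ≠ 0)
    (n : ℕ) : x ^ n + y ^ n = ∑ j ∈ range (n / 2 + 1),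
      ((lucasV n).coeff j : L) * (x * y) ^ j * (x + y) ^ (n - 2 * j) := by
  have hnorm : x / (x + y) + y / (x + y) = 1 := by field_simp
  calc x ^ n + y ^ n
      = (x + y) ^ n * ((x / (x + y)) ^ n + (y / (x + y)) ^ n) := by
        rw [div_pow, div_pow, ← add_div, mul_div_cancel₀ _ (pow_ne_zero _ hs)]
    _ = (x + y) ^ n * aeval (x * y / (x + y) ^ 2) (lucasV n) := by
        rw [sq, ← div_mul_div_comm, aeval_lucasV hnorm]
    _ = _ := by
        rw [aeval_eq_sum_range' (Nat.lt_succ_of_le (natDegree_lucasV_le n)), mul_sum]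
        refine sum_congr rfl fun j hj => ?_
        obtain ⟨r, hr⟩ : ∃ r, n = 2 * j + r := ⟨n - 2 * j, by grind⟩
        have hpow : (x + y) ^ (2 * j + r) * (x * y / (x + y) ^ 2) ^ j =
            (x * y) ^ j * (x + y) ^ r := by
          rw [div_pow, ← pow_mul, pow_add]
          field_simp
        rw [zsmul_eq_mul, hr, show 2 * j + r - 2 * j = r by omega, mul_left_comm, hpow, mul_assoc]

theorem cOdd_eq_coeff_lucasV (i j : ℕ) :
    cOdd (2 * (i + j) + 1) i = (lucasV (2 * (i + j) + 1)).coeff j := by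
  have hN : (2 * i + j + 1 : ℚ) ≠ 0 := by positivity
  have hchoose := Nat.choose_mul_succ_eq (2 * i + j) j
  rw [show 2 * i + j + 1 - j = 2 * i + 1 by omega] at hchoose
  rw [cOdd, coeff_lucasV, show (2 * (i + j) + 1 - 1) / 2 - i = j by omega,
    show (2 * (i + j) + 1 + 1) / 2 + i = 2 * i + j + 1 by omega,
    show 2 * (i + j) + 1 - j = 2 * i + j + 1 by omega, show 2 * (i + j) - j = 2 * i + j by omega,
    Nat.choose_symm_of_eq_add (show 2 * i + j + 1 = (2 * i + 1) + j by ring)]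
  qify at hchoose
  field_simp
  push_cast
  linear_combination (-1) ^ j * hchoose

theorem sum_cOdd_eq_pow_add_pow {L : Type*} [Field L] {x y : L} (hxy : x * y ≠ 0) (m : ℕ) :
    ∑ k ∈ range (m + 1), (cOdd (2 * m + 1) k : L) / ((x * y) ^ (2 * m + 1)) ^ k *
      ((x * y) ^ m * (x + y)) ^ (2 * k + 1) = x ^ (2 * m + 1) + y ^ (2 * m + 1) := by
  rcases eq_or_ne (x + y) 0 with hs | hs
  · have hy : y = -x := by linear_combination hs
    simp only [hs, mul_zero, ne_eq, add_eq_zero, one_ne_zero, and_false, not_false_eq_true,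
      zero_pow, sum_const_zero]
    rw [hy, Odd.neg_pow ⟨m, rfl⟩, add_neg_cancel]
  rw [pow_add_pow_eq_sum_coeff_lucasV hs, show (2 * m + 1) / 2 + 1 = m + 1 by omega,
    ← sum_range_reflect]
  refine sum_congr rfl fun j hj => ?_
  obtain ⟨i, rfl⟩ : ∃ i, m = i + j := ⟨m - j, by grind⟩
  have hsplit : ((x * y) ^ (i + j) * (x + y)) ^ (2 * i + 1) =
      ((x * y) ^ (2 * (i + j) + 1)) ^ i * ((x * y) ^ j * (x + y) ^ (2 * i + 1)) := by
    rw [mul_pow]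
    ring
  rw [show i + j + 1 - 1 - j = i by omega, cOdd_eq_coeff_lucasV, Rat.cast_intCast, hsplit,
    show 2 * (i + j) + 1 - 2 * j = 2 * i + 1 by omega, div_mul_eq_mul_div, mul_div_assoc,
    mul_div_cancel_left₀ _ (pow_ne_zero _ (pow_ne_zero _ hxy)), mul_assoc]

theorem u_is_root_of_f_general (K : Type*) [Field K]
    (p : ℕ) (hp : Odd p)
    (d R : K) (hD : d ^ 2 - R ≠ 0)
    (sqrtR y y' : AlgebraicClosure K)
    (hsq : sqrtR ^ 2 = algebraMap K (AlgebraicClosure K) R)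
    (hy : y ^ p = algebraMap K (AlgebraicClosure K) d + sqrtR)
    (hy' : y' ^ p = algebraMap K (AlgebraicClosure K) d - sqrtR) :
    algebraMap K (AlgebraicClosure K) ((d ^ 2 - R) ^ ((p - 1) / 2)) *
        (∑ k ∈ Finset.range ((p - 1) / 2 + 1),
          ((cOdd p k : AlgebraicClosure K) /
              algebraMap K (AlgebraicClosure K) (d ^ 2 - R) ^ k) *
            ((y * y') ^ ((p - 1) / 2) * (y + y')) ^ (2 * k + 1))
      - 2 * algebraMap K (AlgebraicClosure K) d *
          algebraMap K (AlgebraicClosure K) ((d ^ 2 - R) ^ ((p - 1) / 2)) = 0 := by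
  obtain ⟨m, rfl⟩ := hp
  have hnorm : (y * y') ^ (2 * m + 1) = algebraMap K (AlgebraicClosure K) (d ^ 2 - R) := by
    rw [mul_pow, hy, hy', map_sub, map_pow]
    linear_combination -hsq
  have htrace : y ^ (2 * m + 1) + y' ^ (2 * m + 1) = 2 * algebraMap K (AlgebraicClosure K) d := by
    rw [hy, hy']
    ring
  have hyy' : y * y' ≠ 0 := by
    rintro h
    rw [h, zero_pow (Nat.succ_ne_zero _), eq_comm, map_eq_zero] at hnorm
    exact hD hnorm
  rw [show (2 * m + 1 - 1) / 2 = m by omega, ← hnorm, sum_cOdd_eq_pow_add_pow hyy', htrace]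
  ring

theorem u_is_root_of_f (K : Type*) [Field K] [CharZero K]
    (p : ℕ) (hp : Odd p) (hp3 : 3 ≤ p)
    (d R : K) (hd : d ≠ 0) (hR : R ≠ 0) (hD : d ^ 2 - R ≠ 0)
    (sqrtR y y' : AlgebraicClosure K)
    (hsq : sqrtR ^ 2 = algebraMap K (AlgebraicClosure K) R)
    (hy : y ^ p = algebraMap K (AlgebraicClosure K) d + sqrtR)
    (hy' : y' ^ p = algebraMap K (AlgebraicClosure K) d - sqrtR) :
    algebraMap K (AlgebraicClosure K) ((d ^ 2 - R) ^ ((p - 1) / 2)) *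
        (∑ k ∈ Finset.range ((p - 1) / 2 + 1),
          ((cOdd p k : AlgebraicClosure K) /
              algebraMap K (AlgebraicClosure K) (d ^ 2 - R) ^ k) *
            ((y * y') ^ ((p - 1) / 2) * (y + y')) ^ (2 * k + 1))
      - 2 * algebraMap K (AlgebraicClosure K) d *
          algebraMap K (AlgebraicClosure K) ((d ^ 2 - R) ^ ((p - 1) / 2)) = 0 :=
  u_is_root_of_f_general K p hp d R hD sqrtR y y' hsq hy hy'
end

section
/- Let p = 5, K a field of characteristic 0, d, R ∈ K nonzero with D = d² − R ≠ 0. If y^5 = d + √R, y'^5 = d − √R, z = yy', u = z²(y + y'), then u⁵ − 5D·u³ + 5D²·u − 2dD² = 0 (DeMoivre's quintic). -/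
theorem deMoivre_quintic (K : Type*) [Field K] [CharZero K]
    (d R : K) (hd : d ≠ 0) (hR : R ≠ 0) (hD : d ^ 2 - R ≠ 0)
    (sqrtR y y' : AlgebraicClosure K)
    (hsq : sqrtR ^ 2 = algebraMap K (AlgebraicClosure K) R)
    (hy : y ^ 5 = algebraMap K (AlgebraicClosure K) d + sqrtR)
    (hy' : y' ^ 5 = algebraMap K (AlgebraicClosure K) d - sqrtR) :
    let D := algebraMap K (AlgebraicClosure K) (d ^ 2 - R)
    let z := y * y'
    let u := z ^ 2 * (y + y')
    u ^ 5 - 5 * D * u ^ 3 + 5 * D ^ 2 * u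
      - 2 * algebraMap K (AlgebraicClosure K) d * D ^ 2 = 0 := by
  intro D z u
  set A := algebraMap K (AlgebraicClosure K) d with hA
  set B := algebraMap K (AlgebraicClosure K) R with hB
  have hDAB : D = A ^ 2 - B := by simp [D, hA, hB, map_sub, map_pow]
  have h1 : (y * y') ^ 5 = A ^ 2 - B := by
    linear_combination y' ^ 5 * hy + (A + sqrtR) * hy' - hsq
  have h2 : (y + y') ^ 5 - 5 * (y * y') * (y + y') ^ 3
      + 5 * (y * y') ^ 2 * (y + y') = 2 * A := by
    linear_combination hy + hy'
  rw [hDAB]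
  simp only [u, z]
  linear_combination ((y * y') ^ 10) * h2 +
    (5 * (y * y') ^ 6 * (y + y') ^ 3
      - 5 * (y * y') ^ 2 * (y + y') * ((y * y') ^ 5 + (A ^ 2 - B))
      + 2 * A * ((y * y') ^ 5 + (A ^ 2 - B))) * h1
end

section
/- The polynomial Z^{14} + 4316·Z^7 − 2 is irreducible over ℚ. -/
open Polynomial

private lemma irr_int : Irreducible ((X : ℤ[X]) ^ 14 + 4316 * X ^ 7 - 2) := by
  have hdeg : ((X : ℤ[X]) ^ 14 + 4316 * X ^ 7 - 2).natDegree = 14 := by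
    compute_degree!
  have hdegd : ((X : ℤ[X]) ^ 14 + 4316 * X ^ 7 - 2).degree = 14 := by
    compute_degree!
  apply irreducible_of_eisenstein_criterion (P := Ideal.span {(2 : ℤ)})
    (Ideal.span_singleton_prime (by norm_num) |>.2 Int.prime_two)
  · rw [Polynomial.leadingCoeff, hdeg]
    simp [coeff_X_pow, Ideal.mem_span_singleton]
  · intro n hn
    rw [hdegd] at hn
    have hn14 : n < 14 := by exact_mod_cast hn
    simp only [coeff_sub, coeff_add, coeff_X_pow, coeff_ofNat_mul, Ideal.mem_span_singleton]
    interval_cases n <;> norm_num [coeff_ofNat_zero, coeff_ofNat_succ]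
  · rw [hdegd]; norm_num
  · rw [Ideal.span_singleton_pow, Ideal.mem_span_singleton]
    simp only [coeff_sub, coeff_add, coeff_X_pow, coeff_ofNat_mul]
    norm_num [coeff_ofNat_zero, coeff_ofNat_succ]
  · apply Polynomial.Monic.isPrimitive
    unfold Polynomial.Monic
    rw [Polynomial.leadingCoeff, hdeg]
    simp [coeff_X_pow]

theorem irreducible_Z14 : Irreducible ((X : ℚ[X]) ^ 14 + 4316 * X ^ 7 - 2) := by
  have h := irr_int
  have hprim : ((X : ℤ[X]) ^ 14 + 4316 * X ^ 7 - 2).IsPrimitive := by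
    apply Polynomial.Monic.isPrimitive
    unfold Polynomial.Monic
    rw [Polynomial.leadingCoeff]
    have hdeg : ((X : ℤ[X]) ^ 14 + 4316 * X ^ 7 - 2).natDegree = 14 := by compute_degree!
    rw [hdeg]; simp [coeff_X_pow]
  have := (Polynomial.IsPrimitive.Int.irreducible_iff_irreducible_map_cast hprim).1 h
  convert this using 1
  push_cast [Polynomial.map_sub, Polynomial.map_add, Polynomial.map_mul, Polynomial.map_pow]
  simp
end

section
/- Let p ≥ 3 be odd, K a field of characteristic 0, d, R, D ∈ K with R ≠ 0, D = d² − R ≠ 0. Define f(Z) = D^((p−1)/2) Σ_{k=0}^{(p−1)/2} (c_{2k+1}/D^k) Z^{2k+1} − 2dD^((p−1)/2) with c_{2k+1} = (−1)^((p−1)/2−k)(p/((p+1)/2+k))C((p+1)/2+k, 2k+1); define A(Z) = (1/(2R)) Σ_{k=0}^{(p−1)/2} (a_{2k}/D^k) Z^{2k} + (−1)^((p+1)/2)(d/(2RD))Z with a_{2k} = (−1)^k((p−1)/((p−1)/2+k))C((p−1)/2+k, 2k); and define f'(Z) = (1/(R·D^((p−3)/2))) Σ_{j=0}^{(p−3)/2}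 (c'_{2j+1}/D^j) Z^{2j+1} − 2d/(R·D^((p−3)/2)) with c'_{2j+1} = (−1)^((p−3)/2−j)((p−2)/((p−1)/2+j))C((p−1)/2+j, 2j+1). Then 4D²·A(Z)²·R = f(Z)·f'(Z) + Z² − 4D as polynomials in K[Z]. -/
open Polynomial Finset

/-- The coefficient `a_{2k}` of the paper. -/
def aEven (p k : ℕ) : ℚ :=
  (-1) ^ k * (((p : ℚ) - 1) / (((p - 1) / 2 + k : ℕ) : ℚ)) *
    (Nat.choose ((p - 1) / 2 + k) (2 * k) : ℚ)

/-- The coefficient `c'_{2j+1}` of the paper. -/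
def cOdd' (p j : ℕ) : ℚ :=
  (-1) ^ ((p - 3) / 2 - j) * (((p : ℚ) - 2) / (((p - 1) / 2 + j : ℕ) : ℚ)) *
    (Nat.choose ((p - 1) / 2 + j) (2 * j + 1) : ℚ)


section Aux

set_option linter.unusedSectionVars false


def dc (n i : ℕ) : ℚ :=
  (-1) ^ i * ((n : ℚ) / ((n - i : ℕ) : ℚ)) * (Nat.choose (n - i) i : ℚ)

lemma dc_eq_zero {n i : ℕ} (h : n < 2 * i) : dc n i = 0 := by
  have : Nat.choose (n - i) i = 0 := Nat.choose_eq_zero_of_lt (by omega)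
  simp [dc, this]

lemma dc_zero {n : ℕ} (h : 1 ≤ n) : dc n 0 = 1 := by
  have : (n : ℚ) ≠ 0 := Nat.cast_ne_zero.mpr (by omega)
  simp [dc, this]

lemma dc_rec (n i : ℕ) (hn : 1 ≤ n) (hi : 2 * i ≤ n + 1) :
    dc (n + 2) (i + 1) = dc (n + 1) (i + 1) - dc n i := by
  rcases Nat.lt_or_ge n (2 * i) with h | h
  · have h1 : dc (n + 2) (i + 1) = 0 := dc_eq_zero (by omega)
    have h2 : dc (n + 1) (i + 1) = 0 := dc_eq_zero (by omega)
    have h3 : dc n i = 0 := dc_eq_zero (by omega)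
    rw [h1, h2, h3]; ring
  · obtain ⟨s, rfl⟩ : ∃ s, n = s + i := ⟨n - i, by omega⟩
    have hs1 : 1 ≤ s := by omega
    have his : i ≤ s := by omega
    have e1 : s + i + 2 - (i + 1) = s + 1 := by omega
    have e2 : s + i + 1 - (i + 1) = s := by omega
    have e3 : s + i - i = s := by omega
    rw [dc, dc, dc, e1, e2, e3]
    have hsQ : (s : ℚ) ≠ 0 := Nat.cast_ne_zero.mpr (by omega)
    have hiQ : (i : ℚ) + 1 ≠ 0 := by positivity
    have hc1 : ((s:ℚ)+1) * (Nat.choose s i : ℚ) = (Nat.choose (s+1) (i+1) : ℚ) * ((i:ℚ)+1) := by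
      exact_mod_cast congrArg (Nat.cast : ℕ → ℚ) (Nat.add_one_mul_choose_eq s i)
    have hc2 : (Nat.choose s (i+1) : ℚ) * ((i:ℚ)+1) = (Nat.choose s i : ℚ) * ((s:ℚ) - i) := by
      have h0 := congrArg (Nat.cast : ℕ → ℚ) (Nat.choose_succ_right_eq s i)
      push_cast [Nat.cast_sub his] at h0
      linarith [h0]
    have ec1 : (Nat.choose (s+1) (i+1) : ℚ) = ((s:ℚ)+1) * (Nat.choose s i : ℚ) / ((i:ℚ)+1) := by
      field_simp; linarith [hc1]
    have ec2 : (Nat.choose s (i+1) : ℚ) = (Nat.choose s i : ℚ) * ((s:ℚ) - i) / ((i:ℚ)+1) := by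
      field_simp; linarith [hc2]
    push_cast
    rw [ec1, ec2]
    field_simp
    ring

variable {K : Type*} [Field K] [CharZero K]

lemma dickson_closed (a : K) : ∀ n, 1 ≤ n →
    dickson 1 a n = ∑ i ∈ range (n / 2 + 1), C ((dc n i : K) * a ^ i) * X ^ (n - 2 * i) := by
  intro n
  induction n using Nat.strong_induction_on with
  | _ n ih =>
    match n with
    | 0 => intro h; exact absurd h (by omega)
    | 1 => intro _; simp [dc_zero]
    | 2 =>
      intro _
      rw [dickson_two]
      have d20 : dc 2 0 = 1 := dc_zero (by norm_num)
      have d21 : dc 2 1 = -2 := by norm_num [dc]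
      simp [Finset.sum_range_succ, d20, d21, map_ofNat]
      push_cast
      ring
    | (n + 3) =>
      intro _
      rw [dickson_add_two, ih (n + 2) (by omega) (by omega), ih (n + 1) (by omega) (by omega)]
      -- extend the middle sum
      have hext : ∑ i ∈ range ((n + 2) / 2 + 1), C ((dc (n+2) i : K) * a ^ i) * X ^ (n + 2 - 2 * i)
          = ∑ i ∈ range ((n + 1) / 2 + 2), C ((dc (n+2) i : K) * a ^ i) * X ^ (n + 2 - 2 * i) := by
        refine Finset.sum_subset (Finset.range_subset_range.mpr (by omega)) (fun i hi hni => ?_)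
        simp only [Finset.mem_range] at hi hni
        have : dc (n+2) i = 0 := dc_eq_zero (by omega)
        simp [this]
      rw [hext, show (n + 3) / 2 + 1 = (n + 1) / 2 + 2 from by omega]
      symm
      rw [Finset.sum_range_succ' (fun i => C ((dc (n+3) i : K) * a ^ i) * X ^ (n + 3 - 2 * i)) ((n + 1) / 2 + 1),
        Finset.sum_range_succ' (fun i => C ((dc (n+2) i : K) * a ^ i) * X ^ (n + 2 - 2 * i)) ((n + 1) / 2 + 1)]
      rw [mul_add, Finset.mul_sum, Finset.mul_sum, add_sub_right_comm, ← Finset.sum_sub_distrib]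
      congr 1
      · refine Finset.sum_congr rfl fun i hi => ?_
        simp only [Finset.mem_range] at hi
        have hq : (dc (n+3) (i+1) : K) = (dc (n+2) (i+1) : K) - (dc (n+1) i : K) := by
          exact_mod_cast congrArg (Rat.cast : ℚ → K) (dc_rec (n+1) i (by omega) (by omega))
        by_cases h2 : 2 * i ≤ n
        · rw [show n + 3 - 2 * (i+1) = (n - 2*i) + 1 from by omega,
            show n + 2 - 2 * (i+1) = n - 2*i from by omega,
            show n + 1 - 2 * i = (n - 2*i) + 1 from by omega]
          rw [hq]
          push_cast
          simp only [sub_mul, neg_mul, map_sub, map_neg, map_mul, map_pow, map_zero]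
          ring
        · -- 2*i = n+1
          have hb : 2 * i = n + 1 := by omega
          have hg0 : dc (n+2) (i+1) = 0 := dc_eq_zero (by omega)
          rw [show n + 3 - 2 * (i+1) = 0 from by omega, show n + 1 - 2 * i = 0 from by omega]
          rw [hq, hg0]
          push_cast
          simp only [sub_mul, neg_mul, zero_mul, zero_sub, map_sub, map_neg, map_mul, map_pow, map_zero]
          ring
      · rw [dc_zero (show 1 ≤ n+3 by omega), dc_zero (show 1 ≤ n+2 by omega),
          show n + 3 - 2 * 0 = (n + 2 - 2*0) + 1 from by omega]
        ring

lemma dickson_cassini (a : K) : ∀ n,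
    (dickson 1 a (n+1))^2 - dickson 1 a (n+2) * dickson 1 a n
      = C a ^ n * (4 * C a - X ^ 2) := by
  intro n
  induction n with
  | zero =>
    rw [dickson_two]
    simp [dickson_zero, dickson_one]
    ring
  | succ n ih =>
    rw [dickson_add_two 1 a (n+1), dickson_add_two 1 a n]
    rw [dickson_add_two 1 a n] at ih
    ring_nf
    ring_nf at ih
    linear_combination (C a) * ih

-- coefficient identities
lemma q1 (t k : ℕ) (hk : k ≤ t + 1) : cOdd (2*t+3) k = dc (2*t+3) (t+1-k) := by
  have e0 : (2*t+3-1)/2 = t+1 := by omega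
  have e1 : (2*t+3+1)/2 = t+2 := by omega
  have e2 : 2*t+3 - (t+1-k) = t+2+k := by omega
  rw [cOdd, dc, e0, e1, e2, show t+1-k = t+2+k - (2*k+1) from by omega,
    Nat.choose_symm (by omega), show t+2+k - (2*k+1) = t+1-k from by omega]

lemma L1 (a : K) (t : ℕ) :
    ∑ k ∈ range (t+2), C ((cOdd (2*t+3) k : K) * a ^ (t+1-k)) * X ^ (2*k+1)
      = dickson 1 a (2*t+3) := by
  rw [dickson_closed a (2*t+3) (by omega), show (2*t+3)/2 + 1 = t+2 from by omega]
  rw [← Finset.sum_range_reflect (fun i => C ((dc (2*t+3) i : K) * a ^ i) * X ^ (2*t+3 - 2*i)) (t+2)]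
  refine Finset.sum_congr rfl fun k hk => ?_
  simp only [Finset.mem_range] at hk
  rw [show t+2-1-k = t+1-k from by omega,
    show 2*t+3 - 2*(t+1-k) = 2*k+1 from by omega,
    q1 t k (by omega)]

lemma q3 (t j : ℕ) (hj : j ≤ t) : cOdd' (2*t+3) j = dc (2*t+1) (t-j) := by
  have e0 : (2*t+3-3)/2 = t := by omega
  have e1 : (2*t+3-1)/2 = t+1 := by omega
  have e2 : 2*t+1 - (t-j) = t+1+j := by omega
  rw [cOdd', dc, e0, e1, e2, show t-j = t+1+j - (2*j+1) from by omega,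
    Nat.choose_symm (by omega), show t+1+j - (2*j+1) = t-j from by omega]
  push_cast
  ring

lemma q2 (t k : ℕ) (hk : k ≤ t + 1) : aEven (2*t+3) k = (-1)^(t+1) * dc (2*t+2) (t+1-k) := by
  have e1 : (2*t+3-1)/2 = t+1 := by omega
  have e2 : 2*t+2 - (t+1-k) = t+1+k := by omega
  rw [aEven, dc, e1, e2, show t+1-k = t+1+k - (2*k) from by omega,
    Nat.choose_symm (by omega), show t+1+k - 2*k = t+1-k from by omega]
  have hs : (-1:ℚ)^(t+1-k) * (-1)^k = (-1)^(t+1) := by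
    rw [← pow_add, show t+1-k+k = t+1 from by omega]
  have h2 : (-1:ℚ)^(t+1-k) * (-1)^(t+1-k) = 1 := by
    rw [← pow_add]; exact Even.neg_one_pow ⟨t+1-k, by omega⟩
  have hsgn : (-1:ℚ)^k = (-1)^(t+1) * (-1)^(t+1-k) := by
    rw [← hs, mul_comm ((-1:ℚ)^(t+1-k)) ((-1:ℚ)^k), mul_assoc, h2, mul_one]
  rw [hsgn]
  push_cast
  ring

lemma L3 (a : K) (t : ℕ) :
    ∑ j ∈ range (t+1), C ((cOdd' (2*t+3) j : K) * a ^ (t-j)) * X ^ (2*j+1)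
      = dickson 1 a (2*t+1) := by
  rw [dickson_closed a (2*t+1) (by omega), show (2*t+1)/2 + 1 = t+1 from by omega]
  rw [← Finset.sum_range_reflect (fun i => C ((dc (2*t+1) i : K) * a ^ i) * X ^ (2*t+1 - 2*i)) (t+1)]
  refine Finset.sum_congr rfl fun j hj => ?_
  simp only [Finset.mem_range] at hj
  rw [show t+1-1-j = t-j from by omega,
    show 2*t+1 - 2*(t-j) = 2*j+1 from by omega,
    q3 t j (by omega)]

lemma L2 (a : K) (t : ℕ) :
    ∑ k ∈ range (t+2), C ((aEven (2*t+3) k : K) * a ^ (t+1-k)) * X ^ (2*k)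
      = C ((-1:K)^(t+1)) * dickson 1 a (2*t+2) := by
  rw [dickson_closed a (2*t+2) (by omega), show (2*t+2)/2 + 1 = t+2 from by omega]
  rw [Finset.mul_sum]
  rw [← Finset.sum_range_reflect
    (fun i => C ((-1:K)^(t+1)) * (C ((dc (2*t+2) i : K) * a ^ i) * X ^ (2*t+2 - 2*i))) (t+2)]
  refine Finset.sum_congr rfl fun k hk => ?_
  simp only [Finset.mem_range] at hk
  rw [show t+2-1-k = t+1-k from by omega,
    show 2*t+2 - 2*(t+1-k) = 2*k from by omega]
  rw [← mul_assoc, ← map_mul, ← mul_assoc]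
  congr 2
  have := q2 t k (by omega)
  have hcast : (aEven (2*t+3) k : K) = (-1:K)^(t+1) * (dc (2*t+2) (t+1-k) : K) := by
    exact_mod_cast congrArg (Rat.cast : ℚ → K) this
  rw [hcast]


lemma key {K : Type*} [CommRing K] (t : ℕ) (d R D : K) (P P1 P2 : K[X])
    (hDdef : D = d^2 - R)
    (hrec : P = X * P1 - C D * P2)
    (hcass : P1^2 - P * P2 = C D ^ (2*t+1) * (4 * C D - X^2)) :
    (P1 - C d * C D ^ t * X)^2
      = (P - 2 * C d * C D ^ (t+1)) * (P2 - 2 * C d * C D ^ t)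
        + C R * C D ^ (2*t) * (X^2 - 4 * C D) := by
  have hC : (C D : K[X]) = C d ^ 2 - C R := by
    rw [hDdef, map_sub, map_pow]
  linear_combination hcass + (2 * C d * C D ^ t) * hrec
    - (C D ^ (2*t) * (X^2 - 4 * C D)) * hC

end Aux

theorem basic_identity (K : Type*) [Field K] [CharZero K]
    (p : ℕ) (hp : Odd p) (hp3 : 3 ≤ p)
    (d R : K) (hR : R ≠ 0) (hD : d ^ 2 - R ≠ 0) :
    let D : K := d ^ 2 - R
    let f : K[X] := Polynomial.C (D ^ ((p - 1) / 2)) *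
        ∑ k ∈ Finset.range ((p - 1) / 2 + 1),
          Polynomial.C ((cOdd p k : K) / D ^ k) * X ^ (2 * k + 1)
      - Polynomial.C (2 * d * D ^ ((p - 1) / 2))
    let A : K[X] := Polynomial.C (1 / (2 * R)) *
        ∑ k ∈ Finset.range ((p - 1) / 2 + 1),
          Polynomial.C ((aEven p k : K) / D ^ k) * X ^ (2 * k)
      + Polynomial.C ((-1 : K) ^ ((p + 1) / 2) * d / (2 * R * D)) * X
    let f' : K[X] := Polynomial.C (1 / (R * D ^ ((p - 3) / 2))) *
        ∑ j ∈ Finset.range ((p - 3) / 2 + 1),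
          Polynomial.C ((cOdd' p j : K) / D ^ j) * X ^ (2 * j + 1)
      - Polynomial.C (2 * d / (R * D ^ ((p - 3) / 2)))
    4 * Polynomial.C (D ^ 2) * A ^ 2 * Polynomial.C R =
      f * f' + X ^ 2 - 4 * Polynomial.C D := by
  have hodd := Nat.odd_iff.mp hp
  obtain ⟨t, rfl⟩ : ∃ t, p = 2*t+3 := ⟨(p-3)/2, by omega⟩
  intro D f A f'
  have hD0 : D ≠ 0 := hD
  have sum_clear : ∀ (M : ℕ) (g : ℕ → K) (e : ℕ → ℕ),
      C (D^M) * ∑ k ∈ range (M+1), C (g k / D^k) * X^(e k)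
        = ∑ k ∈ range (M+1), C (g k * D^(M-k)) * X^(e k) := by
    intro M g e
    rw [Finset.mul_sum]
    refine Finset.sum_congr rfl fun k hk => ?_
    simp only [Finset.mem_range] at hk
    rw [← mul_assoc, ← map_mul]
    have : D^M * (g k / D^k) = g k * D^(M-k) := by
      rw [pow_sub₀ D hD0 (by omega : k ≤ M), div_eq_mul_inv]
      ring
    rw [this]
  -- f
  have hfval : f = dickson 1 D (2*t+3) - C (2*d*D^(t+1)) := by
    have hfb : f = C (D ^ ((2*t+3 - 1) / 2)) *
        ∑ k ∈ Finset.range ((2*t+3 - 1) / 2 + 1),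
          C ((cOdd (2*t+3) k : K) / D ^ k) * X ^ (2 * k + 1)
      - C (2 * d * D ^ ((2*t+3 - 1) / 2)) := rfl
    rw [hfb, show (2*t+3-1)/2 = t+1 from by omega, sum_clear (t+1),
      show t+1+1 = t+2 from by omega, L1 D t]
  -- f'
  have hf'val : C R * C D ^ (2*t) * f' = dickson 1 D (2*t+1) - C (2*d*D^t) := by
    have hfb : f' = C (1 / (R * D ^ ((2*t+3 - 3) / 2))) *
        ∑ j ∈ Finset.range ((2*t+3 - 3) / 2 + 1),
          C ((cOdd' (2*t+3) j : K) / D ^ j) * X ^ (2 * j + 1)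
      - C (2 * d / (R * D ^ ((2*t+3 - 3) / 2))) := rfl
    rw [hfb, show (2*t+3-3)/2 = t from by omega]
    rw [mul_sub, ← mul_assoc]
    have e1 : C R * (C D : K[X]) ^ (2*t) * C (1/(R*D^t)) = C (D^t) := by
      rw [← map_pow, ← map_mul, ← map_mul]
      congr 1
      field_simp
      ring
    have e2 : C R * (C D : K[X]) ^ (2*t) * C (2*d/(R*D^t)) = C (2*d*D^t) := by
      rw [← map_pow, ← map_mul, ← map_mul]
      congr 1
      field_simp
      ring
    rw [e1, e2, sum_clear t, L3 D t]
  -- A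
  have hAval : C (2*R*D^(t+1)) * A
      = C ((-1:K)^(t+1)) * (dickson 1 D (2*t+2) - C (d*D^t) * X) := by
    have hfb : A = C (1 / (2 * R)) *
        ∑ k ∈ Finset.range ((2*t+3 - 1) / 2 + 1),
          C ((aEven (2*t+3) k : K) / D ^ k) * X ^ (2 * k)
      + C ((-1 : K) ^ ((2*t+3 + 1) / 2) * d / (2 * R * D)) * X := rfl
    rw [hfb, show (2*t+3-1)/2 = t+1 from by omega, show (2*t+3+1)/2 = t+2 from by omega]
    rw [mul_add, ← mul_assoc, ← mul_assoc]
    have e1 : (C (2*R*D^(t+1)) : K[X]) * C (1/(2*R)) = C (D^(t+1)) := by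
      rw [← map_mul]
      congr 1
      field_simp
    have e2 : (C (2*R*D^(t+1)) : K[X]) * C ((-1:K)^(t+2) * d/(2*R*D)) = C ((-1:K)^(t+2) * (d*D^t)) := by
      rw [← map_mul]
      congr 1
      field_simp
      ring
    rw [e1, e2, sum_clear (t+1), show t+1+1 = t+2 from by omega, L2 D t]
    rw [show ((-1:K)^(t+2) * (d*D^t)) = (-1:K)^(t+1) * -(d*D^t) from by ring, map_mul, map_neg]
    ring
  have hA2 : (C (2*R*D^(t+1)) : K[X])^2 * A^2
      = (dickson 1 D (2*t+2) - C (d*D^t) * X)^2 := by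
    rw [← mul_pow, hAval, mul_pow, ← map_pow,
      show ((-1:K)^(t+1))^2 = 1 from by rw [← pow_mul, mul_comm, pow_mul]; norm_num,
      map_one, one_mul]
  have hrec := dickson_add_two 1 D (2*t+1)
  rw [show 2*t+1+2 = 2*t+3 from by omega, show 2*t+1+1 = 2*t+2 from by omega] at hrec
  have hcass := dickson_cassini D (2*t+1)
  rw [show 2*t+1+2 = 2*t+3 from by omega, show 2*t+1+1 = 2*t+2 from by omega] at hcass
  have E := key t d R D (dickson 1 D (2*t+3)) (dickson 1 D (2*t+2)) (dickson 1 D (2*t+1))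
    rfl hrec hcass
  have hW : ((2*R*D^(t+1))^2 * (R*D^(2*t))) ≠ 0 :=
    mul_ne_zero (pow_ne_zero _ (mul_ne_zero (mul_ne_zero two_ne_zero hR) (pow_ne_zero _ hD0)))
      (mul_ne_zero hR (pow_ne_zero _ hD0))
  apply mul_left_cancel₀ (a := C ((2*R*D^(t+1))^2 * (R*D^(2*t)))) (by
    simpa using hW)
  rw [hfval]
  simp only [map_mul, map_pow, map_ofNat] at hA2 hf'val E ⊢
  linear_combination (4*(C D:K[X])^2*(C R)^2*(C D)^(2*t)) * hA2
    + (4*(C D:K[X])^2*(C R)^2*(C D)^(2*t)) * E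
    - (4*(C D:K[X])^2*(C R)^2*(C D)^(2*t)) * (dickson 1 D (2*t+3) - 2*C d*(C D)^(t+1)) * hf'val
end

section
/- Under the hypotheses of the basic identity (f, A as defined, D = d² − R ≠ 0, R ≠ 0), if u is a root of f in an extension of K, then 4D²·A(u)²·R = u² − 4D. -/
open Finset

open Polynomial

/-!
Write `u = t + s` with `t * s = D` and `p = 2m + 1`. Up to the reindexing `j = m - k` and signs,
`c_{2k+1}` and `a_{2k}` are the coefficients `(-1) ^ j * n / (n - j) * C(n - j, j)` of the Dickson
polynomials `D_n(u, D) = t ^ n + s ^ n` for `n = p` and `n = p - 1`. So `f(u) = 0` says that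
`X = t ^ p` and `Y = s ^ p` have sum `2 d D ^ m` and product `D ^ p`, whence `e = X - d D ^ m`
satisfies `e ^ 2 = R D ^ (2m)`. Moreover `D (t ^ (p-1) + s ^ (p-1)) - d D ^ m u = -e (t - s)`, so
`2 R D ^ (m+1) A(u) = ± e (t - s)`, and squaring gives the identity since
`(t - s) ^ 2 = u ^ 2 - 4 D`.
-/

theorem Nat.choose_sub_succ_succ (n j : ℕ) :
    (n + 1 - j).choose (j + 1) = (n - j).choose j + (n - j).choose (j + 1) := by
  rcases le_or_gt j n with h | h
  · rw [show n + 1 - j = n - j + 1 by omega, Nat.choose_succ_succ']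
  · rw [show n + 1 - j = 0 by omega, show n - j = 0 by omega,
      Nat.choose_eq_zero_of_lt (by omega : 0 < j), Nat.choose_eq_zero_of_lt (by omega : 0 < j + 1)]

section CommRing

variable {R : Type*} [CommRing R]

theorem Polynomial.dickson_one_eval_add (x y : R) :
    ∀ n, (dickson 1 (x * y) n).eval (x + y) = x ^ n + y ^ n
  | 0 => by norm_num
  | 1 => by simp
  | n + 2 => by
    simp only [dickson_add_two, eval_sub, eval_mul, eval_X, eval_C,
      dickson_one_eval_add x y n, dickson_one_eval_add x y (n + 1)]
    ring

theorem Polynomial.dickson_two_eval_eq_sum (a s : R) :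
    ∀ n, (dickson 2 a n).eval s =
      ∑ j ∈ range (n + 1), (-1) ^ j * ((n - j).choose j : R) * a ^ j * s ^ (n - 2 * j)
  | 0 => by norm_num
  | 1 => by simp [sum_range_succ]
  | n + 2 => by
    obtain ⟨T, hT⟩ : ∃ T : ℕ → ℕ → R,
        ∀ n j, T n j = (-1) ^ j * ((n - j).choose j : R) * a ^ j * s ^ (n - 2 * j) :=
      ⟨_, fun _ _ => rfl⟩
    have pascal (j : ℕ) : T (n + 2) (j + 1) = s * T (n + 1) (j + 1) - a * T n j := by
      simp only [hT, show n + 2 - (j + 1) = n + 1 - j by omega,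
        show n + 1 - (j + 1) = n - j by omega, show n + 2 - 2 * (j + 1) = n - 2 * j by omega,
        Nat.choose_sub_succ_succ, Nat.cast_add]
      rcases lt_or_ge n (2 * j + 1) with h | h
      · rw [Nat.choose_eq_zero_of_lt (by omega : n - j < j + 1)]
        ring
      · rw [show n - 2 * j = n + 1 - 2 * (j + 1) + 1 by omega]
        ring
    have head : T (n + 2) 0 = s * T (n + 1) 0 := by simp [hT, pow_succ']
    have vanish (n : ℕ) : T n (n + 1) = 0 := by simp [hT]
    simp only [dickson_add_two, eval_sub, eval_mul, eval_X, eval_C,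
      dickson_two_eval_eq_sum a s n, dickson_two_eval_eq_sum a s (n + 1), ← hT]
    rw [sum_range_succ' (T (n + 2)), sum_congr rfl fun j _ => pascal j, sum_sub_distrib,
      ← mul_sum, ← mul_sum, sum_range_succ (fun j => T (n + 1) (j + 1)),
      sum_range_succ (T n) (n + 1), sum_range_succ' (T (n + 1)), vanish, vanish, head]
    ring

theorem Polynomial.dickson_one_add_two_eq_dickson_two_sub (a : R) :
    ∀ n, dickson 1 a (n + 2) = dickson 2 a (n + 2) - C a * dickson 2 a n
  | 0 | 1 => by simp only [dickson_add_two, dickson_one, dickson_zero]; norm_num; ring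
  | n + 2 => by
    rw [dickson_add_two, dickson_one_add_two_eq_dickson_two_sub a n,
      dickson_one_add_two_eq_dickson_two_sub a (n + 1), dickson_add_two 2 a (n + 2),
      dickson_add_two 2 a n]
    ring

end CommRing

theorem cOdd_two_mul_add_one_sub {m j : ℕ} (hj : j ≤ m) :
    cOdd (2 * m + 1) (m - j) =
      (-1) ^ j * (((2 * m + 1 : ℕ) : ℚ) / (2 * m + 1 - j : ℕ) *
        (2 * m + 1 - j).choose j) := by
  rw [cOdd, show (2 * m + 1 - 1) / 2 - (m - j) = j by omega,
    show (2 * m + 1 + 1) / 2 + (m - j) = 2 * m + 1 - j by omega,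
    ← Nat.choose_symm_of_eq_add (by omega : 2 * m + 1 - j = 2 * (m - j) + 1 + j)]
  ring

theorem aEven_two_mul_add_one_sub {m j : ℕ} (hj : j ≤ m) :
    aEven (2 * m + 1) (m - j) =
      (-1) ^ m * ((-1) ^ j * (((2 * m : ℕ) : ℚ) / (2 * m - j : ℕ) *
        (2 * m - j).choose j)) := by
  rw [aEven, show (2 * m + 1 - 1) / 2 + (m - j) = 2 * m - j by omega,
    ← Nat.choose_symm_of_eq_add (by omega : 2 * m - j = 2 * (m - j) + j)]
  have sign : (-1 : ℚ) ^ (m - j) = (-1) ^ m * (-1) ^ j := by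
    rw [← pow_add, show m + j = m - j + 2 * j by omega, pow_add, pow_mul]
    norm_num
  push_cast
  rw [sign]
  ring

section Field

variable {K : Type*} [Field K] [CharZero K]

theorem Nat.cast_add_two_div_mul_choose (n j : ℕ) :
    ((n + 2 : ℕ) : K) / ((n + 1 - j : ℕ) : K) * (n + 1 - j).choose (j + 1) =
      (n + 1 - j).choose (j + 1) + (n - j).choose j := by
  rcases le_or_gt j n with h | h
  · obtain ⟨N, rfl⟩ := Nat.exists_eq_add_of_le h
    have hN : (N : K) + 1 ≠ 0 := Nat.cast_add_one_ne_zero N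
    have hchoose : ((N + 1 : ℕ) : K) * N.choose j = (N + 1).choose (j + 1) * (j + 1) := by
      exact_mod_cast Nat.add_one_mul_choose_eq N j
    rw [show j + N + 1 - j = N + 1 by omega, show j + N - j = N by omega,
      show j + N + 2 = (N + 1) + (j + 1) by omega]
    field_simp
    push_cast at hchoose ⊢
    linear_combination -hchoose
  · rw [show n + 1 - j = 0 by omega, show n - j = 0 by omega,
      Nat.choose_eq_zero_of_lt (by omega : 0 < j), Nat.choose_eq_zero_of_lt (by omega : 0 < j + 1)]
    simp

theorem Polynomial.dickson_one_eval_eq_sum (a s : K) :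
    ∀ n, n ≠ 0 → (dickson 1 a n).eval s = ∑ j ∈ range (n + 1),
      (-1) ^ j * ((n : K) / (n - j : ℕ) * (n - j).choose j) * a ^ j * s ^ (n - 2 * j)
  | 0, h => absurd rfl h
  | 1, _ => by simp [sum_range_succ]
  | n + 2, _ => by
    obtain ⟨T, hT⟩ : ∃ T : ℕ → ℕ → K,
        ∀ n j, T n j = (-1) ^ j * ((n - j).choose j : K) * a ^ j * s ^ (n - 2 * j) :=
      ⟨_, fun _ _ => rfl⟩
    have term (j : ℕ) : (-1) ^ (j + 1) * (((n + 2 : ℕ) : K) / (n + 2 - (j + 1) : ℕ) *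
          (n + 2 - (j + 1)).choose (j + 1)) * a ^ (j + 1) * s ^ (n + 2 - 2 * (j + 1)) =
        T (n + 2) (j + 1) - a * T n j := by
      rw [hT, hT, show n + 2 - (j + 1) = n + 1 - j by omega, Nat.cast_add_two_div_mul_choose,
        show n + 2 - 2 * (j + 1) = n - 2 * j by omega]
      ring
    have hn : ((n + 2 : ℕ) : K) ≠ 0 := Nat.cast_ne_zero.mpr (by omega)
    rw [dickson_one_add_two_eq_dickson_two_sub, eval_sub, eval_mul, eval_C,
      dickson_two_eval_eq_sum, dickson_two_eval_eq_sum]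
    simp only [← hT]
    conv_rhs => rw [sum_range_succ', sum_congr rfl fun j _ => term j, sum_sub_distrib, ← mul_sum,
      sum_range_succ (T n) (n + 1)]
    have vanish : T n (n + 1) = 0 := by simp [hT]
    rw [sum_range_succ' (T (n + 2)), vanish, hT (n + 2) 0, Nat.sub_zero, div_self hn]
    ring

theorem Polynomial.dickson_one_eval_eq_sum_range_half (a s : K) {n : ℕ} (hn : n ≠ 0) :
    (dickson 1 a n).eval s = ∑ j ∈ range (n / 2 + 1),
      (-1) ^ j * ((n : K) / (n - j : ℕ) * (n - j).choose j) * a ^ j * s ^ (n - 2 * j) := by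
  rw [dickson_one_eval_eq_sum a s n hn]
  refine (sum_subset (range_subset_range.2 (by omega)) fun j _ hj => ?_).symm
  rw [mem_range, not_lt] at hj
  rw [Nat.choose_eq_zero_of_lt (by omega : n - j < j)]
  simp

theorem pow_mul_sum_cOdd_div_pow (a s : K) (ha : a ≠ 0) (m : ℕ) :
    a ^ m * ∑ k ∈ range (m + 1), (cOdd (2 * m + 1) k : K) / a ^ k * s ^ (2 * k + 1) =
      (dickson 1 a (2 * m + 1)).eval s := by
  rw [dickson_one_eval_eq_sum_range_half a s (by omega), show (2 * m + 1) / 2 = m by omega,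
    mul_sum, ← sum_range_reflect]
  refine sum_congr rfl fun j hj => ?_
  rw [mem_range] at hj
  rw [show m + 1 - 1 - j = m - j by omega, cOdd_two_mul_add_one_sub (by omega),
    show 2 * (m - j) + 1 = 2 * m + 1 - 2 * j by omega,
    show a ^ m = a ^ j * a ^ (m - j) by rw [← pow_add]; congr 1; omega]
  push_cast
  field_simp

theorem sum_aEven_div_pow_eq (a s : K) (ha : a ≠ 0) {m : ℕ} (hm : m ≠ 0) :
    ∑ k ∈ range (m + 1), (aEven (2 * m + 1) k : K) / a ^ k * s ^ (2 * k) =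
      (-1) ^ m * (dickson 1 a (2 * m)).eval s / a ^ m := by
  rw [eq_div_iff (pow_ne_zero m ha), mul_comm, dickson_one_eval_eq_sum_range_half a s (by omega),
    show 2 * m / 2 = m by omega, mul_sum, mul_sum, ← sum_range_reflect]
  refine sum_congr rfl fun j hj => ?_
  rw [mem_range] at hj
  rw [show m + 1 - 1 - j = m - j by omega, aEven_two_mul_add_one_sub (by omega),
    show 2 * (m - j) = 2 * m - 2 * j by omega,
    show a ^ m = a ^ j * a ^ (m - j) by rw [← pow_add]; congr 1; omega]
  push_cast
  field_simp

end Field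

theorem four_mul_sq_mul_eq_sq_sub_of_pow_add_pow {L : Type*} [Field L] [NeZero (2 : L)]
    {t s d R : L} (m : ℕ) (hR : R ≠ 0) (hD : t * s ≠ 0) (hts : t * s = d ^ 2 - R)
    (hpow : t ^ (2 * m + 1) + s ^ (2 * m + 1) = 2 * d * (t * s) ^ m) :
    4 * (t * s) ^ 2 * (1 / (2 * R) * ((-1) ^ m * (t ^ (2 * m) + s ^ (2 * m)) / (t * s) ^ m) +
      (-1) ^ (m + 1) * d / (2 * R * (t * s)) * (t + s)) ^ 2 * R = (t - s) ^ 2 := by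
  set D := t * s with hDdef
  set W := D ^ m with hW
  set e := t ^ (2 * m + 1) - d * W with he
  have hprod : t ^ (2 * m + 1) * s ^ (2 * m + 1) = D * W ^ 2 := by
    rw [← mul_pow, hW, ← pow_mul, ← pow_succ']
    ring
  have he2 : e ^ 2 = R * W ^ 2 := by
    linear_combination t ^ (2 * m + 1) * hpow - hprod - W ^ 2 * hts
  have hdiff : D * (t ^ (2 * m) + s ^ (2 * m)) - d * W * (t + s) = -(e * (t - s)) := by
    linear_combination (t ^ (2 * m) + s ^ (2 * m)) * hDdef + (t - s) * he + t * hpow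
  have hW0 : W ≠ 0 := pow_ne_zero m hD
  set A := 1 / (2 * R) * ((-1) ^ m * (t ^ (2 * m) + s ^ (2 * m)) / W) +
      (-1) ^ (m + 1) * d / (2 * R * D) * (t + s) with hAdef
  have hA : 2 * R * D * W * A = (-1) ^ m * -(e * (t - s)) := by
    rw [← hdiff, hAdef]
    field_simp
    ring
  have hsign : ((-1 : L) ^ m) ^ 2 = 1 := by rw [← pow_mul, pow_mul', neg_one_sq, one_pow]
  refine mul_left_cancel₀ (mul_ne_zero hR (pow_ne_zero 2 hW0)) ?_
  linear_combination (2 * R * D * W * A + (-1) ^ m * -(e * (t - s))) * hA +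
    (t - s) ^ 2 * he2 + e ^ 2 * (t - s) ^ 2 * hsign

theorem exists_add_eq_and_mul_eq {L : Type*} [Field L] [IsAlgClosed L] [NeZero (2 : L)]
    (u D : L) : ∃ t s, t + s = u ∧ t * s = D := by
  obtain ⟨w, hw⟩ := IsAlgClosed.exists_eq_mul_self (u ^ 2 - 4 * D)
  refine ⟨(u + w) / 2, (u - w) / 2, by field_simp; ring, ?_⟩
  field_simp
  linear_combination hw

theorem root_of_f_identity_general (K : Type*) [Field K] [CharZero K]
    (p : ℕ) (hp : Odd p) (hp3 : 3 ≤ p)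
    (d R : K) (hR : R ≠ 0) (hD : d ^ 2 - R ≠ 0)
    (u : AlgebraicClosure K)
    (hu : algebraMap K (AlgebraicClosure K) ((d ^ 2 - R) ^ ((p - 1) / 2)) *
        (∑ k ∈ Finset.range ((p - 1) / 2 + 1),
          ((cOdd p k : AlgebraicClosure K) /
              algebraMap K (AlgebraicClosure K) (d ^ 2 - R) ^ k) * u ^ (2 * k + 1))
      - 2 * algebraMap K (AlgebraicClosure K) d *
          algebraMap K (AlgebraicClosure K) ((d ^ 2 - R) ^ ((p - 1) / 2)) = 0) :
    4 * algebraMap K (AlgebraicClosure K) ((d ^ 2 - R) ^ 2) *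
        (algebraMap K (AlgebraicClosure K) (1 / (2 * R)) *
            (∑ k ∈ Finset.range ((p - 1) / 2 + 1),
              ((aEven p k : AlgebraicClosure K) /
                  algebraMap K (AlgebraicClosure K) (d ^ 2 - R) ^ k) * u ^ (2 * k))
          + algebraMap K (AlgebraicClosure K)
              ((-1 : K) ^ ((p + 1) / 2) * d / (2 * R * (d ^ 2 - R))) * u) ^ 2 *
        algebraMap K (AlgebraicClosure K) R =
      u ^ 2 - 4 * algebraMap K (AlgebraicClosure K) (d ^ 2 - R) := by
  obtain ⟨m, rfl⟩ := hp
  simp only [show (2 * m + 1 - 1) / 2 = m by omega, show (2 * m + 1 + 1) / 2 = m + 1 by omega,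
    map_pow, map_div₀, map_mul, map_sub, map_neg, map_one, map_ofNat] at hu ⊢
  set d' := algebraMap K (AlgebraicClosure K) d
  set R' := algebraMap K (AlgebraicClosure K) R
  have hR' : R' ≠ 0 := (_root_.map_ne_zero _).mpr hR
  have hD' : d' ^ 2 - R' ≠ 0 := by
    simpa using (_root_.map_ne_zero (algebraMap K (AlgebraicClosure K))).mpr hD
  obtain ⟨t, s, rfl, hts⟩ := exists_add_eq_and_mul_eq u (d' ^ 2 - R')
  rw [pow_mul_sum_cOdd_div_pow _ _ hD', ← hts, dickson_one_eval_add, sub_eq_zero] at hu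
  rw [sum_aEven_div_pow_eq _ _ hD' (by omega), ← hts, dickson_one_eval_add]
  exact (four_mul_sq_mul_eq_sq_sub_of_pow_add_pow m hR' (hts ▸ hD') hts hu).trans (by ring)

theorem root_of_f_identity (K : Type*) [Field K] [CharZero K]
    (p : ℕ) (hp : Odd p) (hp3 : 3 ≤ p)
    (d R : K) (hd : d ≠ 0) (hR : R ≠ 0) (hD : d ^ 2 - R ≠ 0)
    (u : AlgebraicClosure K)
    (hu : algebraMap K (AlgebraicClosure K) ((d ^ 2 - R) ^ ((p - 1) / 2)) *
        (∑ k ∈ Finset.range ((p - 1) / 2 + 1),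
          ((cOdd p k : AlgebraicClosure K) /
              algebraMap K (AlgebraicClosure K) (d ^ 2 - R) ^ k) * u ^ (2 * k + 1))
      - 2 * algebraMap K (AlgebraicClosure K) d *
          algebraMap K (AlgebraicClosure K) ((d ^ 2 - R) ^ ((p - 1) / 2)) = 0) :
    4 * algebraMap K (AlgebraicClosure K) ((d ^ 2 - R) ^ 2) *
        (algebraMap K (AlgebraicClosure K) (1 / (2 * R)) *
            (∑ k ∈ Finset.range ((p - 1) / 2 + 1),
              ((aEven p k : AlgebraicClosure K) /
                  algebraMap K (AlgebraicClosure K) (d ^ 2 - R) ^ k) * u ^ (2 * k))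
          + algebraMap K (AlgebraicClosure K)
              ((-1 : K) ^ ((p + 1) / 2) * d / (2 * R * (d ^ 2 - R))) * u) ^ 2 *
        algebraMap K (AlgebraicClosure K) R =
      u ^ 2 - 4 * algebraMap K (AlgebraicClosure K) (d ^ 2 - R) :=
  root_of_f_identity_general K p hp hp3 d R hR hD u hu
end

section
/- Let p ≥ 3 be odd and define u_k = ((−1)^k (p−1)/k)·C(p+k−2, 2k−1) for k = 1, …, p−1, and s_k as the convolution sum s_k = (−1)^k Σ_{j=0}^{k} ((p−1)/((p−1)/2+j))C((p−1)/2+j, 2j)·((p−1)/((p−1)/2+k−j))C((p−1)/2+k−j, 2(k−j)). Then s_k = u_k for all k = 1, …, p−1. -/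
open Finset Polynomial

/-- Coefficient magnitudes of the Dickson polynomial `dickson 1 1 n`. -/
def cc : ℕ → ℕ → ℕ
  | n, 0 => if n = 0 then 2 else 1
  | n, (i+1) => (n - (i+1)).choose (i+1) + (n - 1 - (i+1)).choose i

lemma cc_diag (t : ℕ) : cc (2*t) t = 2 := by
  cases t with
  | zero => simp [cc]
  | succ s =>
    show (2*(s+1) - (s+1)).choose (s+1) + (2*(s+1) - 1 - (s+1)).choose s = 2
    have h1 : 2*(s+1) - (s+1) = s + 1 := by omega
    have h2 : 2*(s+1) - 1 - (s+1) = s := by omega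
    rw [h1, h2, Nat.choose_self, Nat.choose_self]

lemma cc_zero (n : ℕ) (h : n ≠ 0) : cc n 0 = 1 := by simp [cc, h]

lemma cc_rec (n t : ℕ) (h : 2*(t+1) ≤ n+1) :
    cc (n+2) (t+1) = cc (n+1) (t+1) + cc n t := by
  cases t with
  | zero =>
    have hn : n ≠ 0 := by omega
    show (n + 2 - 1).choose 1 + (n + 2 - 1 - 1).choose 0
        = ((n + 1 - 1).choose 1 + (n + 1 - 1 - 1).choose 0) + cc n 0
    rw [cc_zero n hn]
    have e1 : n + 2 - 1 = n + 1 := by omega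
    have e2 : n + 2 - 1 - 1 = n := by omega
    have e3 : n + 1 - 1 = n := by omega
    have e4 : n + 1 - 1 - 1 = n - 1 := by omega
    rw [e2, e1, e4, e3]
    simp only [Nat.choose_one_right, Nat.choose_zero_right]
    all_goals omega
  | succ s =>
    obtain ⟨r, rfl⟩ : ∃ r, n = 2*s + 3 + r := ⟨n - (2*s+3), by omega⟩
    show (2*s + 3 + r + 2 - (s+2)).choose (s+2) + (2*s + 3 + r + 2 - 1 - (s+2)).choose (s+1)
        = ((2*s + 3 + r + 1 - (s+2)).choose (s+2) + (2*s + 3 + r + 1 - 1 - (s+2)).choose (s+1))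
          + ((2*s + 3 + r - (s+1)).choose (s+1) + (2*s + 3 + r - 1 - (s+1)).choose s)
    have e1 : 2*s + 3 + r + 2 - (s+2) = (s + r + 2) + 1 := by omega
    have e2 : 2*s + 3 + r + 2 - 1 - (s+2) = (s + r + 1) + 1 := by omega
    have e3 : 2*s + 3 + r + 1 - (s+2) = s + r + 2 := by omega
    have e4 : 2*s + 3 + r + 1 - 1 - (s+2) = s + r + 1 := by omega
    have e5 : 2*s + 3 + r - (s+1) = s + r + 2 := by omega
    have e6 : 2*s + 3 + r - 1 - (s+1) = s + r + 1 := by omega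
    rw [e2, e1, e4, e3, e6, e5]
    simp only [Nat.choose_succ_succ, Nat.succ_eq_add_one]
    omega

lemma coeff_dickson : ∀ (n j : ℕ), (dickson 1 (1:ℚ) n).coeff j =
    if j ≤ n ∧ (n - j) % 2 = 0 then (-1:ℚ)^((n-j)/2) * (cc n ((n-j)/2) : ℚ) else 0
  | 0, j => by
    have h : dickson 1 (1:ℚ) 0 = C 2 := by rw [dickson_zero, map_ofNat]; push_cast; ring
    rw [h, coeff_C]
    rcases Nat.eq_zero_or_pos j with rfl | hj
    · simp [cc]
    · rw [if_neg (by omega), if_neg (by omega)]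
  | 1, j => by
    rw [dickson_one, coeff_X]
    by_cases hj : j = 1
    · subst hj
      rw [if_pos rfl, if_pos (by omega)]
      norm_num [cc]
    · rw [if_neg (by omega), if_neg (by omega)]
  | (n+2), j => by
    have ih1 := coeff_dickson n
    have ih2 := coeff_dickson (n+1)
    rw [dickson_add_two, coeff_sub, C_1, one_mul]
    cases j with
    | zero =>
      rw [mul_coeff_zero, coeff_X_zero, zero_mul, ih1 0]
      rcases Nat.even_or_odd n with ⟨t, rfl⟩ | ⟨t, rfl⟩
      · have e1 : (t + t - 0) % 2 = 0 := by omega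
        have e2 : (t + t - 0) / 2 = t := by omega
        have e3 : (t + t + 2 - 0) % 2 = 0 := by omega
        have e4 : (t + t + 2 - 0) / 2 = t + 1 := by omega
        rw [if_pos ⟨by omega, e1⟩, if_pos ⟨by omega, e3⟩, e2, e4]
        have d1 : cc (t + t) t = 2 := by rw [show t + t = 2*t by ring, cc_diag]
        have d2 : cc (t + t + 2) (t+1) = 2 := by rw [show t+t+2 = 2*(t+1) by ring, cc_diag]
        rw [d1, d2, pow_succ]
        push_cast; ring
      · rw [if_neg (by omega), if_neg (by omega)]
        ring
    | succ j' =>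
      rw [coeff_X_mul, ih2 j', ih1 (j'+1)]
      by_cases h1 : j' + 1 ≤ n + 2 ∧ (n + 2 - (j'+1)) % 2 = 0
      · rw [if_pos h1]
        by_cases hj : j' + 1 = n + 2
        · rw [if_pos (show j' ≤ n+1 ∧ (n+1-j')%2 = 0 by omega), if_neg (by omega)]
          have e1 : (n + 1 - j') / 2 = 0 := by omega
          have e2 : (n + 2 - (j'+1)) / 2 = 0 := by omega
          rw [e1, e2, cc_zero (n+1) (by omega), cc_zero (n+2) (by omega)]
          ring
        · obtain ⟨t, ht⟩ : ∃ t, (n + 2 - (j'+1)) / 2 = t + 1 :=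
            ⟨(n + 2 - (j'+1)) / 2 - 1, by omega⟩
          rw [if_pos (show j' ≤ n+1 ∧ (n+1-j')%2 = 0 by omega),
            if_pos (show j'+1 ≤ n ∧ (n-(j'+1))%2 = 0 by omega)]
          have e1 : (n + 1 - j') / 2 = t + 1 := by omega
          have e2 : (n - (j'+1)) / 2 = t := by omega
          rw [e1, e2, ht, cc_rec n t (by omega), pow_succ]
          push_cast; ring
      · rw [if_neg h1, if_neg (show ¬(j' ≤ n+1 ∧ (n+1-j')%2 = 0) by omega),
          if_neg (show ¬(j'+1 ≤ n ∧ (n-(j'+1))%2 = 0) by omega)]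
        ring

lemma sq_dickson (m : ℕ) :
    (dickson 1 (1:ℚ) (2*m))^2 = dickson 1 1 (2*(2*m)) + 2 := by
  rw [dickson_one_one_mul (R := ℚ) 2 (2*m), dickson_two]
  simp only [sub_comp, pow_comp, X_comp, mul_comp, C_comp, ofNat_comp, natCast_comp, C_1, one_comp]
  push_cast
  ring

lemma sum_range_two_mul (n : ℕ) (f : ℕ → ℚ) :
    ∑ t ∈ Finset.range (2*n), f t = ∑ j ∈ Finset.range n, (f (2*j) + f (2*j+1)) := by
  induction n with
  | zero => simp
  | succ n ih =>
    rw [Finset.sum_range_succ, show 2*(n+1) = (2*n+1)+1 by ring, Finset.sum_range_succ,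
      Finset.sum_range_succ, ih]
    ring

lemma sum_even (k : ℕ) (g : ℕ → ℚ) (h : ∀ j, g (2*j+1) = 0) :
    ∑ t ∈ Finset.range (2*k+1), g t = ∑ j ∈ Finset.range (k+1), g (2*j) := by
  have h2 := sum_range_two_mul (k+1) g
  rw [show 2*(k+1) = (2*k+1)+1 by ring, Finset.sum_range_succ] at h2
  simp only [h, add_zero] at h2
  exact h2

lemma cc_val (m j : ℕ) (hm : 1 ≤ m) (hj : j ≤ m) :
    (cc (2*m) (m-j) : ℚ) = (2*(m:ℚ))/((m:ℚ)+(j:ℚ)) * (((m+j).choose (2*j) : ℕ) : ℚ) := by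
  rcases eq_or_lt_of_le hj with rfl | hlt
  · rw [Nat.sub_self, cc_zero _ (by omega), show j + j = 2*j by ring, Nat.choose_self]
    have hne : (j:ℚ) + (j:ℚ) ≠ 0 := by
      have : (1:ℚ) ≤ (j:ℚ) := by exact_mod_cast hm
      linarith
    push_cast
    rw [show 2*(j:ℚ) = (j:ℚ) + j by ring, div_self hne, one_mul]
  · obtain ⟨i, hi⟩ : ∃ i, m - j = i + 1 := ⟨m-j-1, by omega⟩
    rw [hi]
    show (((2*m - (i+1)).choose (i+1) + (2*m - 1 - (i+1)).choose i : ℕ) : ℚ) = _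
    have e1 : 2*m - (i+1) = m + j := by omega
    have e2 : 2*m - 1 - (i+1) = m + j - 1 := by omega
    rw [e1, e2]
    have s1 : (m+j).choose (i+1) = (m+j).choose (2*j) := by
      rw [← Nat.choose_symm (show 2*j ≤ m + j by omega)]
      congr 1
      omega
    have s2 : (m+j-1).choose i = (m+j-1).choose (2*j) := by
      rw [← Nat.choose_symm (show 2*j ≤ m + j - 1 by omega)]
      congr 1
      omega
    rw [s1, s2]
    have key : (m+j) * ((m+j-1).choose (2*j)) = ((m+j).choose (2*j)) * (m-j) := by
      have h1 := Nat.add_one_mul_choose_eq (m+j-1) (2*j)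
      have h2 := Nat.choose_succ_right_eq (m+j) (2*j)
      rw [show m+j-1+1 = m+j by omega] at h1
      rw [h2, show m + j - 2*j = m - j by omega] at h1
      exact h1
    have keyQ : ((m:ℚ)+j) * (((m+j-1).choose (2*j) : ℕ) : ℚ)
        = (((m+j).choose (2*j) : ℕ) : ℚ) * ((m:ℚ) - j) := by
      have := congrArg (fun x : ℕ => (x:ℚ)) key
      push_cast [Nat.cast_sub hj] at this
      convert this using 2
    have hmj : ((m:ℚ) + j) ≠ 0 := by
      have h1 : (1:ℚ) ≤ (m:ℚ) := by exact_mod_cast hm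
      have h2 : (0:ℚ) ≤ (j:ℚ) := Nat.cast_nonneg j
      linarith
    rw [div_mul_eq_mul_div, eq_div_iff hmj]
    push_cast
    linear_combination keyQ

lemma coeff_even (m j : ℕ) (hm : 1 ≤ m) :
    (dickson 1 (1:ℚ) (2*m)).coeff (2*j) =
      (-1:ℚ)^m * (-1)^j *
        ((2*(m:ℚ))/((m:ℚ)+(j:ℚ)) * (((m+j).choose (2*j) : ℕ) : ℚ)) := by
  rw [coeff_dickson]
  by_cases hj : j ≤ m
  · rw [if_pos ⟨by omega, by omega⟩, show (2*m - 2*j)/2 = m - j by omega, cc_val m j hm hj]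
    have hsn : (-1:ℚ)^(m-j) = (-1)^m * (-1)^j := by
      have h1 : (-1:ℚ)^(m-j) * (-1)^(j+j) = (-1)^(m+j) := by
        rw [← pow_add]
        congr 1
        omega
      have h2 : ((-1:ℚ))^(j+j) = 1 := Even.neg_one_pow ⟨j, rfl⟩
      rw [h2, mul_one, pow_add] at h1
      exact h1
    rw [hsn]
  · rw [if_neg (by omega)]
    rw [Nat.choose_eq_zero_of_lt (show m + j < 2*j by omega)]
    push_cast
    ring

/-- the basic rational coefficient -/
def qa (m j : ℕ) : ℚ := (2*(m:ℚ))/((m:ℚ)+(j:ℚ)) * (((m+j).choose (2*j) : ℕ) : ℚ)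

lemma qa_conv (m k : ℕ) (hm : 1 ≤ m) (hk : 1 ≤ k) (hk2 : k ≤ 2*m) :
    ∑ j ∈ Finset.range (k+1), qa m j * qa m (k-j)
      = (2*(m:ℚ))/(k:ℚ) * (((2*m+k-1).choose (2*k-1) : ℕ) : ℚ) := by
  set P := dickson 1 (1:ℚ) (2*m) with hP
  have h1 : (P^2).coeff (2*k) = (-1:ℚ)^k * ∑ j ∈ Finset.range (k+1), qa m j * qa m (k-j) := by
    rw [sq, coeff_mul]
    rw [Finset.Nat.sum_antidiagonal_eq_sum_range_succ (fun a b => P.coeff a * P.coeff b)]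
    have hodd : ∀ j : ℕ, P.coeff (2*j+1) * P.coeff (2*k - (2*j+1)) = 0 := by
      intro j
      have hz : P.coeff (2*j+1) = 0 := by
        rw [hP, coeff_dickson, if_neg (by omega)]
      rw [hz, zero_mul]
    rw [sum_even k (fun t => P.coeff t * P.coeff (2*k - t)) hodd]
    rw [Finset.mul_sum]
    apply Finset.sum_congr rfl
    intro j hj
    have hjk : j ≤ k := Nat.lt_succ_iff.mp (Finset.mem_range.mp hj)
    show P.coeff (2*j) * P.coeff (2*k - 2*j) = _
    rw [show 2*k - 2*j = 2*(k-j) by omega, hP, coeff_even m j hm, coeff_even m (k-j) hm]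
    have hsk : (-1:ℚ)^j * (-1)^(k-j) = (-1)^k := by
      rw [← pow_add]
      congr 1
      omega
    have hm2 : (-1:ℚ)^m * (-1)^m = 1 := by
      rw [← pow_add]
      exact Even.neg_one_pow ⟨m, rfl⟩
    have habs : ∀ a b : ℚ, ((-1:ℚ)^m * (-1)^j * a) * ((-1)^m * (-1)^(k-j) * b)
        = (-1)^k * (a*b) := by
      intro a b
      calc ((-1:ℚ)^m * (-1)^j * a) * ((-1)^m * (-1)^(k-j) * b)
          = ((-1:ℚ)^m * (-1)^m) * (((-1)^j * (-1)^(k-j)) * (a*b)) := by ring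
        _ = (-1)^k * (a*b) := by rw [hm2, hsk, one_mul]
    exact habs _ _
  have h2 : (P^2).coeff (2*k)
      = (-1:ℚ)^k * ((2*(m:ℚ))/(k:ℚ) * (((2*m+k-1).choose (2*k-1) : ℕ) : ℚ)) := by
    rw [hP, sq_dickson m, coeff_add]
    have hc2 : ((2:ℚ[X])).coeff (2*k) = 0 := by
      rw [show (2:ℚ[X]) = C 2 from (map_ofNat C 2).symm, coeff_C, if_neg (by omega)]
    rw [hc2, add_zero, coeff_dickson, if_pos ⟨by omega, by omega⟩,
      show (2*(2*m) - 2*k)/2 = 2*m - k by omega]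
    rw [cc_val (2*m) k (by omega) hk2]
    have hsn : (-1:ℚ)^(2*m-k) = (-1)^k := by
      have hh1 : (-1:ℚ)^(2*m-k) * (-1)^k = (-1)^(2*m) := by
        rw [← pow_add]
        congr 1
        omega
      have hh2 : ((-1:ℚ))^(2*m) = 1 := Even.neg_one_pow ⟨m, by ring⟩
      have hh3 : ((-1:ℚ))^k * (-1)^k = 1 := by
        rw [← pow_add]
        exact Even.neg_one_pow ⟨k, rfl⟩
      exact mul_right_cancel₀ (pow_ne_zero k (by norm_num : (-1:ℚ) ≠ 0))
        (hh1.trans (hh2.trans hh3.symm))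
    rw [hsn]
    congr 1
    have key : (2*m+k) * ((2*m+k-1).choose (2*k-1)) = ((2*m+k).choose (2*k)) * (2*k) := by
      have h := Nat.add_one_mul_choose_eq (2*m+k-1) (2*k-1)
      rw [show 2*m+k-1+1 = 2*m+k by omega, show 2*k-1+1 = 2*k by omega] at h
      exact h
    have keyQ : (2*(m:ℚ)+k) * (((2*m+k-1).choose (2*k-1) : ℕ) : ℚ)
        = (((2*m+k).choose (2*k) : ℕ) : ℚ) * (2*(k:ℚ)) := by
      exact_mod_cast key
    have hden1 : 2*(m:ℚ) + (k:ℚ) ≠ 0 := by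
      have h1 : (1:ℚ) ≤ (m:ℚ) := by exact_mod_cast hm
      have h2 : (0:ℚ) ≤ (k:ℚ) := Nat.cast_nonneg k
      linarith
    have hden2 : (k:ℚ) ≠ 0 := Nat.cast_ne_zero.mpr (by omega)
    push_cast
    rw [div_mul_eq_mul_div, div_mul_eq_mul_div, div_eq_div_iff hden1 hden2]
    linear_combination (-2*(m:ℚ)) * keyQ
  exact mul_left_cancel₀ (pow_ne_zero k (by norm_num : (-1:ℚ) ≠ 0)) (h1.symm.trans h2)

/-- The convolution coefficient `s_k` of the paper. -/
def sConv (p k : ℕ) : ℚ :=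
  (-1) ^ k * ∑ j ∈ Finset.range (k + 1),
    (((p : ℚ) - 1) / (((p - 1) / 2 + j : ℕ) : ℚ)) *
      (Nat.choose ((p - 1) / 2 + j) (2 * j) : ℚ) *
    ((((p : ℚ) - 1) / (((p - 1) / 2 + (k - j) : ℕ) : ℚ)) *
      (Nat.choose ((p - 1) / 2 + (k - j)) (2 * (k - j)) : ℚ))

/-- The closed form `u_k` of the paper. -/
def uClosed (p k : ℕ) : ℚ :=
  (-1) ^ k * (((p : ℚ) - 1) / (k : ℚ)) * (Nat.choose (p + k - 2) (2 * k - 1) : ℚ)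

theorem s_eq_u (p : ℕ) (hp : Odd p) (hp3 : 3 ≤ p) (k : ℕ)
    (hk1 : 1 ≤ k) (hk2 : k ≤ p - 1) :
    sConv p k = uClosed p k := by
  obtain ⟨m, hm⟩ := hp
  have hm1 : 1 ≤ m := by omega
  have hhalf : (p-1)/2 = m := by omega
  have hk2m : k ≤ 2*m := by omega
  have hpq : (p:ℚ) = 2*(m:ℚ)+1 := by
    rw [hm]
    push_cast
    ring
  unfold sConv uClosed
  rw [hhalf]
  have hS : ∑ j ∈ Finset.range (k + 1),
      (((p : ℚ) - 1) / ((m + j : ℕ) : ℚ)) * (Nat.choose (m + j) (2 * j) : ℚ) *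
      ((((p : ℚ) - 1) / ((m + (k - j) : ℕ) : ℚ)) *
        (Nat.choose (m + (k - j)) (2 * (k - j)) : ℚ))
      = ∑ j ∈ Finset.range (k+1), qa m j * qa m (k-j) := by
    apply Finset.sum_congr rfl
    intro j _
    unfold qa
    rw [hpq]
    push_cast
    ring
  rw [hS, qa_conv m k hm1 hk1 hk2m, show p + k - 2 = 2*m+k-1 by omega, hpq]
  ring
end

section
/- Let p ≥ 3 be odd and define t_k = (−1)^k Σ_{j=0}^{k−1} (p/((p+1)/2+j))C((p+1)/2+j, 2j+1) · ((p−2)/((p−1)/2+k−j−1))C((p−1)/2+k−j−1, 2(k−j)−1) and u_k = ((−1)^k (p−1)/k)·C(p+k−2, 2k−1). Then t_k = u_k for all k = 2, …, p−1. -/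
/-!
Write `D_n` for the Dickson polynomial `Polynomial.Chebyshev.C n`, so `D_n(y + y⁻¹) = yⁿ + y⁻ⁿ`.
From `D_n = 2 S_n - X S_{n-1}` and the Pascal recursion for the coefficients of the
Vieta–Fibonacci polynomials `S_n`, the coefficient of `x^i` in `D_{i+2j}` is
`(-1)^j (i+2j)/(i+j) C(i+j, i)`. So for `p = 2m+1` the two factors of the `j`-th summand of `t_k`
are, up to signs multiplying to `(-1)^k`, the coefficients of `x^(2j+1)` in `D_p` and of
`x^(2(k-j)-1)` in `D_{p-2}`. As `D_p` is odd, `t_k` is the coefficient of `x^(2k)` in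
`D_p D_{p-2} = D_{2p-2} + D_2`, which for `k ≥ 2` is the coefficient in `D_{2p-2}`, namely `u_k`.
-/

open Finset

/-- The convolution coefficient `t_k` of the paper. -/
def tConv (p k : ℕ) : ℚ :=
  (-1) ^ k * ∑ j ∈ Finset.range k,
    ((p : ℚ) / (((p + 1) / 2 + j : ℕ) : ℚ)) *
      (Nat.choose ((p + 1) / 2 + j) (2 * j + 1) : ℚ) *
    ((((p : ℚ) - 2) / (((p - 1) / 2 + (k - j - 1) : ℕ) : ℚ)) *
      (Nat.choose ((p - 1) / 2 + (k - j - 1)) (2 * (k - j) - 1) : ℚ))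

open Polynomial

namespace Polynomial

theorem coeff_mul_two_mul_of_coeff_two_mul_eq_zero {R : Type*} [CommRing R] {P : R[X]}
    (hP : ∀ j, P.coeff (2 * j) = 0) (Q : R[X]) (k : ℕ) :
    (P * Q).coeff (2 * k) = ∑ j ∈ range k, P.coeff (2 * j + 1) * Q.coeff (2 * (k - j) - 1) := by
  rw [coeff_mul, Nat.sum_antidiagonal_eq_sum_range_succ (fun a b => P.coeff a * Q.coeff b)]
  have hsub : (range k).image (2 * · + 1) ⊆ range (2 * k + 1) := by
    intro a
    simp only [mem_image, mem_range]
    omega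
  rw [← sum_subset hsub, sum_image (by intro a _ b _ h; simpa using h)]
  · refine sum_congr rfl fun j hj => ?_
    rw [mem_range] at hj
    congr 2
    omega
  · intro a ha hnot_odd
    simp only [mem_image, mem_range, not_exists, not_and] at ha hnot_odd
    rcases Nat.even_or_odd' a with ⟨j, rfl | rfl⟩
    · rw [hP, zero_mul]
    · exact absurd rfl (hnot_odd j (by omega))

namespace Chebyshev

section CommRing

variable {R : Type*} [CommRing R]

theorem S_natCast_add_two (n : ℕ) :
    S R ((n + 2 : ℕ) : ℤ) = X * S R ((n + 1 : ℕ) : ℤ) - S R n := by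
  push_cast
  exact S_add_two R n

theorem coeff_S_natCast_eq_zero {n i : ℕ} (h : n < i ∨ Odd (n + i)) : (S R n).coeff i = 0 := by
  rw [Nat.odd_iff] at h
  induction n using Nat.twoStepInduction generalizing i with
  | zero => rw [Nat.cast_zero, S_zero, coeff_one, if_neg (by omega)]
  | one => rw [Nat.cast_one, S_one, coeff_X, if_neg (by omega)]
  | more n ih0 ih1 =>
    rw [S_natCast_add_two, coeff_sub, ih0 (by omega), sub_zero]
    cases i with
    | zero => exact coeff_X_mul_zero _
    | succ i => rw [coeff_X_mul, ih1 (by omega)]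

theorem coeff_S_natCast_self (n : ℕ) : (S R n).coeff n = 1 := by
  induction n using Nat.twoStepInduction with
  | zero => simp
  | one => simp
  | more n _ ih =>
    rw [S_natCast_add_two, coeff_sub, coeff_X_mul, ih, coeff_S_natCast_eq_zero (by omega),
      sub_zero]

theorem coeff_S_natCast_add_two_mul (i j : ℕ) :
    (S R (i + 2 * j : ℕ)).coeff i = (-1) ^ j * (i + j).choose i := by
  induction j generalizing i with
  | zero => simp [coeff_S_natCast_self]
  | succ j ihj =>
    induction i with
    | zero =>
      rw [show 0 + 2 * (j + 1) = 2 * j + 2 by ring, S_natCast_add_two, coeff_sub,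
        coeff_X_mul_zero, ← zero_add (2 * j), ihj]
      simp [pow_succ]
    | succ i ihi =>
      rw [show i + 1 + 2 * (j + 1) = i + 1 + 2 * j + 2 by ring, S_natCast_add_two, coeff_sub,
        coeff_X_mul, show i + 1 + 2 * j + 1 = i + 2 * (j + 1) by ring, ihi, ihj,
        show i + 1 + (j + 1) = i + (j + 1) + 1 by ring, Nat.choose_succ_succ',
        show i + 1 + j = i + (j + 1) by ring]
      push_cast
      ring

theorem coeff_C_natCast_eq_zero {n i : ℕ} (h : n < i ∨ Odd (n + i)) : (C R n).coeff i = 0 := by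
  rw [C_eq_S_sub_X_mul_S, coeff_sub, coeff_ofNat_mul, coeff_S_natCast_eq_zero h, mul_zero,
    zero_sub, neg_eq_zero]
  rcases n.eq_zero_or_pos with rfl | hn
  · simp
  cases i with
  | zero => exact coeff_X_mul_zero _
  | succ i =>
    rw [coeff_X_mul, show (n : ℤ) - 1 = ((n - 1 : ℕ) : ℤ) by omega]
    exact coeff_S_natCast_eq_zero (by rw [Nat.odd_iff] at h ⊢; omega)

end CommRing

section Field

variable {K : Type*} [Field K] [CharZero K]

theorem coeff_C_natCast_add_two_mul {i j : ℕ} (h : i + j ≠ 0) :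
    (C K (i + 2 * j : ℕ)).coeff i =
      (-1) ^ j * (((i + 2 * j : ℕ) : K) / (i + j : ℕ)) * (i + j).choose i := by
  rw [C_eq_S_sub_X_mul_S, coeff_sub, coeff_ofNat_mul, coeff_S_natCast_add_two_mul]
  cases i with
  | zero =>
    have hj : ((0 + j : ℕ) : K) ≠ 0 := Nat.cast_ne_zero.mpr h
    rw [coeff_X_mul_zero]
    field_simp
    push_cast
    ring
  | succ i =>
    have habsorb : ((i + j + 1 : ℕ) : K) * (i + j).choose i =
        (i + j + 1).choose (i + 1) * (i + 1) := by
      exact_mod_cast Nat.add_one_mul_choose_eq (i + j) i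
    rw [coeff_X_mul, show ((i + 1 + 2 * j : ℕ) : ℤ) - 1 = ((i + 2 * j : ℕ) : ℤ) by push_cast; ring,
      coeff_S_natCast_add_two_mul, show i + 1 + j = i + j + 1 by ring]
    have hij : (i : K) + j + 1 ≠ 0 := by norm_cast
    push_cast at habsorb ⊢
    field_simp
    linear_combination -habsorb

theorem coeff_C_natCast_two_mul_add_one (m j : ℕ) :
    (C K (2 * m + 1 : ℕ)).coeff (2 * j + 1) =
      (-1) ^ (m + j) * (((2 * m + 1 : ℕ) : K) / (m + 1 + j : ℕ)) *
        (m + 1 + j).choose (2 * j + 1) := by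
  rcases le_or_gt j m with hjm | hmj
  · obtain ⟨d, rfl⟩ := Nat.exists_eq_add_of_le hjm
    rw [show 2 * (j + d) + 1 = 2 * j + 1 + 2 * d by ring, coeff_C_natCast_add_two_mul (by omega),
      show 2 * j + 1 + d = j + d + 1 + j by ring, show j + d + j = d + 2 * j by ring, pow_add,
      (even_two_mul j).neg_one_pow, mul_one]
  · rw [coeff_C_natCast_eq_zero (Or.inl (by omega)), Nat.choose_eq_zero_of_lt (by omega)]
    simp

theorem coeff_C_natCast_two_mul_two_mul {m k : ℕ} (hk : k ≠ 0) :
    (C K (2 * m : ℕ)).coeff (2 * k) =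
      (-1) ^ (m + k) * ((m : K) / k) * (m + k - 1).choose (2 * k - 1) := by
  rcases le_or_gt k m with hkm | hmk
  · obtain ⟨d, rfl⟩ := Nat.exists_eq_add_of_le hkm
    have habsorb := Nat.add_one_mul_choose_eq (2 * k + d - 1) (2 * k - 1)
    rw [show 2 * k + d - 1 + 1 = 2 * k + d by omega, show 2 * k - 1 + 1 = 2 * k by omega] at habsorb
    have habsorbK : ((2 * k + d : ℕ) : K) * (2 * k + d - 1).choose (2 * k - 1) =
        (2 * k + d).choose (2 * k) * (2 * k : ℕ) := by
      exact_mod_cast habsorb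
    rw [show 2 * (k + d) = 2 * k + 2 * d by ring, coeff_C_natCast_add_two_mul (by omega),
      show k + d + k - 1 = 2 * k + d - 1 by omega, show k + d + k = d + 2 * k by ring,
      pow_add, (even_two_mul k).neg_one_pow, mul_one]
    have hk' : (k : K) ≠ 0 := by exact_mod_cast hk
    have hkd : ((2 * k + d : ℕ) : K) ≠ 0 := by norm_cast; omega
    field_simp
    push_cast at habsorbK ⊢
    linear_combination (-((k : K) + d)) * habsorbK
  · rw [coeff_C_natCast_eq_zero (Or.inl (by omega)), Nat.choose_eq_zero_of_lt (by omega)]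
    simp

end Field

end Chebyshev

end Polynomial

theorem tConv_eq_coeff_C_mul_C (n k : ℕ) :
    tConv (2 * (n + 1) + 1) k =
      (Chebyshev.C ℚ (2 * (n + 1) + 1 : ℕ) * Chebyshev.C ℚ (2 * n + 1 : ℕ)).coeff (2 * k) := by
  rw [coeff_mul_two_mul_of_coeff_two_mul_eq_zero
      (fun j => Chebyshev.coeff_C_natCast_eq_zero (Or.inr ⟨n + 1 + j, by ring⟩)),
    tConv, mul_sum]
  refine sum_congr rfl fun j hj => ?_
  rw [mem_range] at hj
  have hsign : (-1 : ℚ) ^ (n + 1 + j) * (-1) ^ (n + (k - j - 1)) = (-1) ^ k := by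
    rw [← pow_add, show n + 1 + j + (n + (k - j - 1)) = k + 2 * n by omega, pow_add,
      (even_two_mul n).neg_one_pow, mul_one]
  rw [show 2 * (k - j) - 1 = 2 * (k - j - 1) + 1 by omega,
    Chebyshev.coeff_C_natCast_two_mul_add_one, Chebyshev.coeff_C_natCast_two_mul_add_one,
    show (2 * (n + 1) + 1 + 1) / 2 = n + 1 + 1 by omega,
    show (2 * (n + 1) + 1 - 1) / 2 = n + 1 by omega, ← hsign]
  push_cast
  ring

theorem t_eq_u_general (p : ℕ) (hp : Odd p) (k : ℕ)
    (hk1 : 2 ≤ k) (hk2 : k ≤ p - 1) :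
    tConv p k = uClosed p k := by
  obtain ⟨m, rfl⟩ := hp
  obtain ⟨n, rfl⟩ : ∃ n, m = n + 1 := ⟨m - 1, by omega⟩
  have hprod : Chebyshev.C ℚ (2 * (n + 1) + 1 : ℕ) * Chebyshev.C ℚ (2 * n + 1 : ℕ) =
      Chebyshev.C ℚ (2 * (2 * n + 2) : ℕ) + Chebyshev.C ℚ 2 := by
    rw [Chebyshev.C_mul_C]
    push_cast
    ring_nf
  have hD2 : (Chebyshev.C ℚ 2).coeff (2 * k) = 0 := by
    rw [Chebyshev.C_two, coeff_sub, coeff_X_pow, if_neg (by omega),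
      show 2 * k = 2 * k - 1 + 1 by omega, coeff_ofNat_succ, sub_zero]
  rw [tConv_eq_coeff_C_mul_C, hprod, coeff_add, hD2, add_zero,
    Chebyshev.coeff_C_natCast_two_mul_two_mul (by omega), uClosed,
    show 2 * (n + 1) + 1 + k - 2 = 2 * n + 2 + k - 1 by omega, pow_add,
    (show Even (2 * n + 2) from ⟨n + 1, by ring⟩).neg_one_pow, one_mul]
  push_cast
  ring

theorem t_eq_u (p : ℕ) (hp : Odd p) (hp3 : 3 ≤ p) (k : ℕ)
    (hk1 : 2 ≤ k) (hk2 : k ≤ p - 1) :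
    tConv p k = uClosed p k :=
  t_eq_u_general p hp k hk1 hk2
end

section
/- Let p ≥ 3 be prime, d, R ∈ ℚ nonzero with D = d² − R, f irreducible over ℚ with splitting field L not containing a primitive p-th root of unity, and suppose D is not the p-th power of a rational number. Let z ∈ ℚ̄ with z^p = D and u a root of f. Then Z^p − D is irreducible over ℚ(u), the field ℚ(z, u) has degree p² over ℚ, √R ∉ ℚ(z, u), and ℚ(z, u, √R) has degree 2p² over ℚ with ℚ-basis { z^j·u^k·(√R)^l : 0 ≤ j, k ≤ p−1, l ∈ {0,1} }. -/
open Polynomial Finset IntermediateField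

/-- The degree-`p` polynomial `f` of the paper, over `ℚ`. -/
noncomputable def fPoly (p : ℕ) (d R : ℚ) : ℚ[X] :=
  Polynomial.C ((d ^ 2 - R) ^ ((p - 1) / 2)) *
      ∑ k ∈ Finset.range ((p - 1) / 2 + 1),
        Polynomial.C (cOdd p k / (d ^ 2 - R) ^ k) * X ^ (2 * k + 1)
    - Polynomial.C (2 * d * (d ^ 2 - R) ^ ((p - 1) / 2))

/-!
As `c_p = 1`, `f` is monic of degree `p`, so `[ℚ(u) : ℚ] = p`. If `D` had a `p`-th root `w` in
`ℚ(u)`, then `w` would lie in the normal field `L`; since `Z ^ p - D` is irreducible over `ℚ`, it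
would split in `L`, so `L` would contain the ratio `ζ_p` of two of its roots. Hence `Z ^ p - D`
stays irreducible over `ℚ(u)` and `[ℚ(z, u) : ℚ] = p²`. This degree is odd, so `ℚ(z, u)` contains
no root of the irreducible quadratic `Z ^ 2 - R`. The power bases of the tower
`ℚ ⊆ ℚ(u) ⊆ ℚ(z, u) ⊆ ℚ(z, u, √R)` multiply to the basis `z ^ j * u ^ k * √R ^ l`.
-/

lemma cOdd_half_eq_one {p m : ℕ} (hm : p = 2 * m + 1) : cOdd p m = 1 := by
  have hhalf : (p - 1) / 2 = m := by omega
  have htop : (p + 1) / 2 + m = p := by omega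
  rw [cOdd, hhalf, htop, ← hm, Nat.sub_self, pow_zero, Nat.choose_self, Nat.cast_one, one_mul,
    mul_one, div_self (Nat.cast_ne_zero.mpr (by omega))]

lemma degree_fPoly_sub_X_pow_lt {p : ℕ} (hp : Odd p) {d R : ℚ} (hD : d ^ 2 - R ≠ 0) :
    (fPoly p d R - X ^ p).degree < (p : WithBot ℕ) := by
  obtain ⟨m, hm⟩ := hp
  have hhalf : (p - 1) / 2 = m := by omega
  have hlower : fPoly p d R - X ^ p =
      C ((d ^ 2 - R) ^ m) * ∑ k ∈ range m, C (cOdd p k / (d ^ 2 - R) ^ k) * X ^ (2 * k + 1)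
        - C (2 * d * (d ^ 2 - R) ^ m) := by
    rw [fPoly, hhalf, sum_range_succ, cOdd_half_eq_one hm, ← hm, mul_add, ← mul_assoc,
      ← C_mul, mul_one_div_cancel (pow_ne_zero _ hD), C_1, one_mul]
    ring
  refine (degree_le_of_natDegree_le (n := 2 * m) ?_).trans_lt (by exact_mod_cast (by omega))
  rw [hlower]
  refine (natDegree_sub_le _ _).trans
    (max_le ((natDegree_C_mul_le _ _).trans ?_) ((natDegree_C _).trans_le (Nat.zero_le _)))
  exact natDegree_sum_le_of_forall_le _ _ fun k hk =>
    (natDegree_C_mul_X_pow_le _ _).trans (by rw [mem_range] at hk; omega)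

lemma fPoly_monic {p : ℕ} (hp : Odd p) {d R : ℚ} (hD : d ^ 2 - R ≠ 0) :
    (fPoly p d R).Monic := by
  simpa using monic_X_pow_add (degree_fPoly_sub_X_pow_lt hp hD)

lemma natDegree_fPoly {p : ℕ} (hp : Odd p) {d R : ℚ} (hD : d ^ 2 - R ≠ 0) :
    (fPoly p d R).natDegree = p := by
  have h := natDegree_add_eq_left_of_degree_lt
    ((degree_fPoly_sub_X_pow_lt hp hD).trans_eq (degree_X_pow p).symm)
  rwa [add_sub_cancel, natDegree_X_pow] at h

section FieldTheory

variable {K E : Type*} [Field K] [Field E] [Algebra K E]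

theorem pow_ne_algebraMap_of_isPrimitiveRoot_notMem (L : IntermediateField K E) [Normal K L]
    {n : ℕ} (hn : n ≠ 0) {a : K} (ha : a ≠ 0) (hirr : Irreducible (X ^ n - C a)) {ζ : E}
    (hζ : IsPrimitiveRoot ζ n) (hζL : ζ ∉ L) {w : E} (hw : w ∈ L) :
    w ^ n ≠ algebraMap K E a := by
  intro hwn
  have hroot : aeval (⟨w, hw⟩ : L) (X ^ n - C a) = 0 := Subtype.ext (by simp [hwn])
  have hsplit : ((X ^ n - C a).map (algebraMap K L)).Splits := by
    rw [minpoly.eq_of_irreducible_of_monic hirr hroot (monic_X_pow_sub_C a hn)]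
    exact Normal.splits ‹_› _
  have hwζ : w * ζ ∈ L := by
    obtain ⟨y, hy⟩ := hsplit.mem_range_of_isRoot (Polynomial.map_ne_zero (X_pow_sub_C_ne_zero
      (Nat.pos_of_ne_zero hn) a)) (i := algebraMap L E) (x := w * ζ)
      (by simp [mul_pow, hζ.pow_eq_one, hwn, ← IsScalarTower.algebraMap_apply])
    exact hy ▸ y.2
  have hw0 : w ≠ 0 := by
    rintro rfl
    exact ha ((algebraMap K E).injective (by simpa [zero_pow hn] using hwn.symm))
  exact hζL (by simpa [hw0] using L.mul_mem (L.inv_mem hw) hwζ)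

theorem irreducible_X_pow_sub_C_adjoin_simple_of_isPrimitiveRoot_notMem [IsAlgClosed E]
    {g : K[X]} (hg : g ≠ 0) {u : E} (hu : aeval u g = 0) {p : ℕ} (hp : p.Prime)
    {a : K} (ha : ∀ b : K, b ^ p ≠ a) {ζ : E} (hζ : IsPrimitiveRoot ζ p)
    (hζL : ζ ∉ adjoin K (g.rootSet E)) :
    Irreducible (X ^ p - C (algebraMap K K⟮u⟯ a)) := by
  have : IsSplittingField K (adjoin K (g.rootSet E)) g :=
    adjoin_rootSet_isSplittingField (IsAlgClosed.splits _)
  have : Normal K (adjoin K (g.rootSet E)) := Normal.of_isSplittingField g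
  have hKu : K⟮u⟯ ≤ adjoin K (g.rootSet E) :=
    adjoin_simple_le_iff.mpr (subset_adjoin K _ ((mem_rootSet_of_ne hg).mpr hu))
  have ha0 : a ≠ 0 := fun h => ha 0 (by rw [h, zero_pow hp.ne_zero])
  refine X_pow_sub_C_irreducible_of_prime hp fun b hb => ?_
  refine pow_ne_algebraMap_of_isPrimitiveRoot_notMem _ hp.ne_zero ha0
    (X_pow_sub_C_irreducible_of_prime hp ha) hζ hζL (hKu b.2) ?_
  rw [← IntermediateField.algebraMap_apply, ← map_pow, hb, ← IsScalarTower.algebraMap_apply]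

theorem irreducible_X_pow_two_sub_C_of_notMem_range {s : E} {r : K}
    (hs : s ^ 2 = algebraMap K E r) (hsK : s ∉ Set.range (algebraMap K E)) :
    Irreducible (X ^ 2 - C r) := by
  refine X_pow_sub_C_irreducible_of_prime Nat.prime_two fun b hb => hsK ?_
  have hsq : algebraMap K E b ^ 2 = s ^ 2 := by rw [← map_pow, hb, hs]
  rcases sq_eq_sq_iff_eq_or_eq_neg.mp hsq with h | h
  · exact ⟨b, h⟩
  · exact ⟨-b, by rw [map_neg, h, neg_neg]⟩

theorem notMem_range_algebraMap_of_not_dvd_finrank {M : Type*} [Field M] [Algebra K M]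
    [Algebra M E] [IsScalarTower K M E] {g : K[X]} (hg : Irreducible g) (hmo : g.Monic) {s : E}
    (hs : aeval s g = 0) (hdeg : ¬ g.natDegree ∣ Module.finrank K M) :
    s ∉ Set.range (algebraMap M E) := by
  rintro ⟨m, rfl⟩
  have : FiniteDimensional K M :=
    Module.finite_of_finrank_pos (Nat.pos_of_ne_zero fun h => hdeg (h ▸ dvd_zero _))
  have hm : aeval m g = 0 :=
    (algebraMap M E).injective (by rwa [map_zero, ← aeval_algebraMap_apply])
  rw [minpoly.eq_of_irreducible_of_monic hg hm hmo] at hdeg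
  exact hdeg (minpoly.degree_dvd (IsIntegral.of_finite K m))

theorem exists_basis_adjoin_pow {g : K[X]} (hg : Irreducible g) (hmo : g.Monic) {x : E}
    (hx : aeval x g = 0) {n : ℕ} (hn : g.natDegree = n) :
    ∃ b : Module.Basis (Fin n) K K⟮x⟯, ∀ i, (b i : E) = x ^ (i : ℕ) := by
  have hint : IsIntegral K x := ⟨g, hmo, by rwa [aeval_def] at hx⟩
  have hdim : (adjoin.powerBasis hint).dim = n := by
    rw [adjoin.powerBasis_dim, ← minpoly.eq_of_irreducible_of_monic hg hx hmo, hn]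
  refine ⟨(adjoin.powerBasis hint).basis.reindex (finCongr hdim), fun i => ?_⟩
  simp

theorem exists_basis_mul_pow_of_restrictScalars_adjoin_eq {F S : IntermediateField K E}
    {ι : Type*} (b : Module.Basis ι K F) {g : F[X]} (hg : Irreducible g) (hmo : g.Monic) {x : E}
    (hx : aeval x g = 0) {n : ℕ} (hn : g.natDegree = n) (hS : (F⟮x⟯).restrictScalars K = S) :
    ∃ c : Module.Basis (ι × Fin n) K S, ∀ i, (c i : E) = b i.1 * x ^ (i.2 : ℕ) := by
  obtain ⟨c, hc⟩ := exists_basis_adjoin_pow hg hmo hx hn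
  subst hS
  let c' : Module.Basis (ι × Fin n) K F⟮x⟯ := b.smulTower c
  refine ⟨c', fun i => ?_⟩
  change ((b.smulTower c i : F⟮x⟯) : E) = _
  rw [Module.Basis.smulTower_apply, IntermediateField.coe_smul, Algebra.smul_def, hc]
  rfl

theorem linearIndependent_coe_and_span_coe {S : IntermediateField K E} {ι : Type*}
    (b : Module.Basis ι K S) :
    LinearIndependent K (fun i => (b i : E)) ∧
      Submodule.span K (Set.range fun i => (b i : E)) = Subalgebra.toSubmodule S.toSubalgebra := by
  let f : S →ₗ[K] E := S.val.toLinearMap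
  refine ⟨b.linearIndependent.map' f (LinearMap.ker_eq_bot.mpr S.val.injective), ?_⟩
  rw [show (fun i => (b i : E)) = f ∘ b from rfl, Set.range_comp,
    Submodule.span_image, b.span_eq, Submodule.map_top]
  ext x
  simp [f]

end FieldTheory

theorem degrees_and_basis_general (p : ℕ) (hp : p.Prime) (hp3 : 3 ≤ p)
    (d R : ℚ) (hD : d ^ 2 - R ≠ 0)
    (hDpow : ¬∃ q : ℚ, q ^ p = d ^ 2 - R)
    (sqrtR : ℂ) (hsq : sqrtR ^ 2 = (R : ℂ))
    (hsR : sqrtR ∉ Set.range ((↑) : ℚ → ℂ))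
    (hf : Irreducible (fPoly p d R))
    (hzeta : ∀ ζ : ℂ, IsPrimitiveRoot ζ p →
      ζ ∉ IntermediateField.adjoin ℚ ((fPoly p d R).rootSet ℂ))
    (z u : ℂ) (hz : z ^ p = ((d : ℂ) ^ 2 - R)) (hu : aeval u (fPoly p d R) = 0) :
    Irreducible ((X ^ p - Polynomial.C (algebraMap ℚ ℚ⟮u⟯ (d ^ 2 - R))) :
        Polynomial ℚ⟮u⟯) ∧
    Module.finrank ℚ (IntermediateField.adjoin ℚ ({z, u} : Set ℂ)) = p ^ 2 ∧
    sqrtR ∉ IntermediateField.adjoin ℚ ({z, u} : Set ℂ) ∧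
    Module.finrank ℚ (IntermediateField.adjoin ℚ ({z, u, sqrtR} : Set ℂ)) = 2 * p ^ 2 ∧
    LinearIndependent ℚ
      (fun i : Fin p × Fin p × Fin 2 =>
        z ^ (i.1 : ℕ) * u ^ (i.2.1 : ℕ) * sqrtR ^ (i.2.2 : ℕ)) ∧
    Submodule.span ℚ
        (Set.range (fun i : Fin p × Fin p × Fin 2 =>
          z ^ (i.1 : ℕ) * u ^ (i.2.1 : ℕ) * sqrtR ^ (i.2.2 : ℕ))) =
      Subalgebra.toSubmodule
        (IntermediateField.adjoin ℚ ({z, u, sqrtR} : Set ℂ)).toSubalgebra := by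
  have hodd : Odd p := hp.odd_of_ne_two (by omega)
  have hζ := Complex.isPrimitiveRoot_exp p hp.ne_zero
  have hirr : Irreducible (X ^ p - C (algebraMap ℚ ℚ⟮u⟯ (d ^ 2 - R))) :=
    irreducible_X_pow_sub_C_adjoin_simple_of_isPrimitiveRoot_notMem hf.ne_zero hu hp
      (not_exists.mp hDpow) hζ (hzeta _ hζ)
  obtain ⟨bu, hbu⟩ :=
    exists_basis_adjoin_pow hf (fPoly_monic hodd hD) hu (natDegree_fPoly hodd hD)
  obtain ⟨b₂, hb₂⟩ :=
    exists_basis_mul_pow_of_restrictScalars_adjoin_eq (S := ℚ⟮z, u⟯) bu hirr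
      (monic_X_pow_sub_C _ hp.ne_zero) (x := z) (by simp [hz]) natDegree_X_pow_sub_C
      (by rw [adjoin_simple_adjoin_simple, Set.pair_comm])
  have hrank₂ : Module.finrank ℚ ℚ⟮z, u⟯ = p ^ 2 := by
    simp [Module.finrank_eq_card_basis b₂, sq]
  have hsK₂ : sqrtR ∉ Set.range (algebraMap ℚ⟮z, u⟯ ℂ) :=
    notMem_range_algebraMap_of_not_dvd_finrank
      (irreducible_X_pow_two_sub_C_of_notMem_range hsq hsR) (monic_X_pow_sub_C _ two_ne_zero)
      (by simp [hsq])
      (by rw [natDegree_X_pow_sub_C, hrank₂]; exact hodd.pow.not_two_dvd_nat)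
  obtain ⟨b₃, hb₃⟩ :=
    exists_basis_mul_pow_of_restrictScalars_adjoin_eq (S := ℚ⟮z, u, sqrtR⟯) b₂
      (irreducible_X_pow_two_sub_C_of_notMem_range (r := algebraMap ℚ _ R) (by simp [hsq]) hsK₂)
      (monic_X_pow_sub_C _ two_ne_zero) (x := sqrtR) (by simp [hsq]) natDegree_X_pow_sub_C
      (by rw [adjoin_adjoin_left, Set.insert_union, Set.singleton_union])
  let e : Fin p × Fin p × Fin 2 ≃ (Fin p × Fin p) × Fin 2 :=
    ⟨fun i => ((i.2.1, i.1), i.2.2), fun i => (i.1.2, i.1.1, i.2), fun _ => rfl, fun _ => rfl⟩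
  have hB : ∀ i, (b₃.reindex e.symm i : ℂ) =
      z ^ (i.1 : ℕ) * u ^ (i.2.1 : ℕ) * sqrtR ^ (i.2.2 : ℕ) := by
    rintro ⟨j, k, l⟩
    rw [Module.Basis.reindex_apply, Equiv.symm_symm]
    change (b₃ ((k, j), l) : ℂ) = _
    rw [hb₃, hb₂, hbu]
    ring
  obtain ⟨hli, hspan⟩ := linearIndependent_coe_and_span_coe (b₃.reindex e.symm)
  simp only [hB] at hli hspan
  refine ⟨hirr, hrank₂, fun h => hsK₂ ⟨⟨sqrtR, h⟩, rfl⟩, ?_, hli, hspan⟩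
  simp [Module.finrank_eq_card_basis b₃]
  ring

theorem degrees_and_basis (p : ℕ) (hp : p.Prime) (hp3 : 3 ≤ p)
    (d R : ℚ) (hd : d ≠ 0) (hR : R ≠ 0) (hD : d ^ 2 - R ≠ 0)
    (hDpow : ¬∃ q : ℚ, q ^ p = d ^ 2 - R)
    (sqrtR : ℂ) (hsq : sqrtR ^ 2 = (R : ℂ))
    (hsR : sqrtR ∉ Set.range ((↑) : ℚ → ℂ))
    (hf : Irreducible (fPoly p d R))
    (hzeta : ∀ ζ : ℂ, IsPrimitiveRoot ζ p →
      ζ ∉ IntermediateField.adjoin ℚ ((fPoly p d R).rootSet ℂ))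
    (z u : ℂ) (hz : z ^ p = ((d : ℂ) ^ 2 - R)) (hu : aeval u (fPoly p d R) = 0) :
    Irreducible ((X ^ p - Polynomial.C (algebraMap ℚ ℚ⟮u⟯ (d ^ 2 - R))) :
        Polynomial ℚ⟮u⟯) ∧
    Module.finrank ℚ (IntermediateField.adjoin ℚ ({z, u} : Set ℂ)) = p ^ 2 ∧
    sqrtR ∉ IntermediateField.adjoin ℚ ({z, u} : Set ℂ) ∧
    Module.finrank ℚ (IntermediateField.adjoin ℚ ({z, u, sqrtR} : Set ℂ)) = 2 * p ^ 2 ∧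
    LinearIndependent ℚ
      (fun i : Fin p × Fin p × Fin 2 =>
        z ^ (i.1 : ℕ) * u ^ (i.2.1 : ℕ) * sqrtR ^ (i.2.2 : ℕ)) ∧
    Submodule.span ℚ
        (Set.range (fun i : Fin p × Fin p × Fin 2 =>
          z ^ (i.1 : ℕ) * u ^ (i.2.1 : ℕ) * sqrtR ^ (i.2.2 : ℕ))) =
      Subalgebra.toSubmodule
        (IntermediateField.adjoin ℚ ({z, u, sqrtR} : Set ℂ)).toSubalgebra :=
  degrees_and_basis_general p hp hp3 d R hD hDpow sqrtR hsq hsR hf hzeta z u hz hu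
end
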